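/- arXiv:math/0104004 — 3 statements merged into one kernel-verified Lean document; each statement's English description precedes it below -/
import Mathlib

section
/- There is a bijection between non-crossing partitions of {1,...,n} and lattice paths (i(1),...,i(n)) with i(m) ∈ {−1, 0, 1, ..., n−1}, satisfying i(1)+⋯+i(m) ≤ 0 for all m = 1,...,n and i(1)+⋯+i(n) = 0. The bijection sends a partition π to the sequence with i(m) = #V − 1 if m is the last element of its block V in π, and i(m) = −1 otherwise. -/
open scoped Classical


open scoped Classical

def NoCrossing {N : ℕ} (π : Finset (Finset (Fin N))) : Prop :=
  ¬ ∃ p1 q1 p2 q2 : Fin N, p1 < q1 ∧ q1 < p2 ∧ p2 < q2 ∧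
      (∃ V ∈ π, p1 ∈ V ∧ p2 ∈ V) ∧ (∃ W ∈ π, q1 ∈ W ∧ q2 ∈ W) ∧
      ¬(∃ V ∈ π, p1 ∈ V ∧ q1 ∈ V)

def IsPartition {N : ℕ} (π : Finset (Finset (Fin N))) : Prop :=
  (∀ V ∈ π, V.Nonempty) ∧ ∀ i : Fin N, ∃! V, V ∈ π ∧ i ∈ V

noncomputable def NCPartitions (N : ℕ) : Finset (Finset (Finset (Fin N))) :=
  Finset.univ.filter fun π => IsPartition π ∧ NoCrossing π

noncomputable def cumProd {A : Type*} [Ring A] (k : ∀ n : ℕ, (Fin n → A) → ℂ)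
    {N : ℕ} (π : Finset (Finset (Fin N))) (a : Fin N → A) : ℂ :=
  ∏ V ∈ π, k V.card (fun i => a (V.orderEmbOfFin rfl i))

def MomentCumulant {A : Type*} [Ring A] [Algebra ℂ A] (φ : A →ₗ[ℂ] ℂ)
    (k : ∀ n : ℕ, (Fin n → A) → ℂ) : Prop :=
  ∀ (N : ℕ) (a : Fin N → A), φ (List.ofFn a).prod = ∑ π ∈ NCPartitions N, cumProd k π a

def FreeFamily {A : Type*} [Ring A] [Algebra ℂ A] (φ : A →ₗ[ℂ] ℂ)
    {ι : Type*} (S : ι → Subalgebra ℂ A) : Prop :=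
  ∀ (len : ℕ) (a : Fin len → A) (j : Fin len → ι),
    (∀ i, a i ∈ S (j i)) →
    (∀ (i : ℕ) (h1 : i + 1 < len), j ⟨i, by omega⟩ ≠ j ⟨i + 1, h1⟩) →
    (∀ i, φ (a i) = 0) →
    φ (List.ofFn a).prod = 0

/-- The lattice path associated to a partition: `i m = #V - 1` if `m` is the last element of
its block `V`, and `-1` otherwise. -/
noncomputable def pathOf {n : ℕ} (π : Finset (Finset (Fin n))) (m : Fin n) : ℤ :=
  if h : ∃ V, V ∈ π ∧ m ∈ V ∧ ∀ j ∈ V, j ≤ m then ((h.choose.card : ℤ) - 1) else -1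

/-!
Both sides are in bijection with the maps `c : Fin n → Fin n` with `x ≤ c x` whose intervals
`[x, c x]` are pairwise nested or disjoint. A non-crossing partition gives the map sending `x` to
the last element of its block; its blocks are the fibres of that map. A path gives the map sending
`j` to the first `m ≥ j` at which the path is back at the level it had before step `j`.

For the partition into the fibres of `c`, the sum of the first `k` steps of its path is minus the
number of elements `x < k` with `c x ≥ k`; comparing these counts shows that the path returns to
the level before step `j` exactly at `c j`. Conversely, for a path `i` and a step `m` with
`i m ≥ 0`, the level before step `x` maps the fibre of `m` bijectively onto the `i m + 1` levels
crossed by step `m`.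
-/

open Finset

namespace NCPartitionPath

variable {n : ℕ}

def sumUpTo (i : Fin n → ℤ) (m : Fin n) : ℤ :=
  ∑ j ∈ univ.filter (· ≤ m), i j

def sumBelow (i : Fin n → ℤ) (k : ℕ) : ℤ :=
  ∑ j ∈ univ.filter (fun j : Fin n => (j : ℕ) < k), i j

@[simp]
lemma sumBelow_zero (i : Fin n → ℤ) : sumBelow i 0 = 0 := by
  simp [sumBelow]

lemma sumBelow_of_le (i : Fin n → ℤ) {k : ℕ} (hk : n ≤ k) : sumBelow i k = ∑ j, i j := by
  rw [sumBelow, filter_true_of_mem fun j _ => lt_of_lt_of_le j.isLt hk]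

lemma sumUpTo_eq_sumBelow_succ (i : Fin n → ℤ) (m : Fin n) :
    sumUpTo i m = sumBelow i (m + 1) := by
  simp only [sumUpTo, sumBelow, Fin.le_def, Nat.lt_succ_iff]

lemma sumUpTo_eq_sumBelow_add (i : Fin n → ℤ) (m : Fin n) :
    sumUpTo i m = sumBelow i m + i m := by
  have : univ.filter (· ≤ m) = insert m (univ.filter fun j : Fin n => (j : ℕ) < m) := by
    ext j
    simp only [mem_filter, mem_univ, true_and, mem_insert, le_iff_eq_or_lt, Fin.lt_def]
  rw [sumUpTo, sumBelow, this, sum_insert (by simp), add_comm]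

/-- Read backwards, this is a Łukasiewicz path: steps `≥ -1`, partial sums `≥ 0`, ending at 0. -/
structure IsLukasiewiczPath (i : Fin n → ℤ) : Prop where
  neg_one_le : ∀ m, -1 ≤ i m
  sumUpTo_nonpos : ∀ m, sumUpTo i m ≤ 0
  sum_eq_zero : ∑ j, i j = 0

lemma IsLukasiewiczPath.sumBelow_nonpos {i : Fin n → ℤ} (hi : IsLukasiewiczPath i) :
    ∀ k, sumBelow i k ≤ 0
  | 0 => by simp
  | k + 1 => by
    by_cases hk : k < n
    · simpa only [sumUpTo_eq_sumBelow_succ] using hi.sumUpTo_nonpos ⟨k, hk⟩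
    · rw [sumBelow_of_le i (by omega), hi.sum_eq_zero]

/-- The intervals `[x, c x]` are pairwise nested or disjoint. -/
structure IsNested (c : Fin n → Fin n) : Prop where
  le_apply : ∀ x, x ≤ c x
  apply_le_apply : ∀ ⦃x y⦄, x ≤ y → y ≤ c x → c y ≤ c x

lemma IsNested.apply_apply {c : Fin n → Fin n} (hc : IsNested c) (x : Fin n) : c (c x) = c x :=
  le_antisymm (hc.apply_le_apply (hc.le_apply x) le_rfl) (hc.le_apply _)

def returnTimes (i : Fin n → ℤ) (j : Fin n) : Finset (Fin n) :=
  univ.filter fun m => j ≤ m ∧ sumBelow i j ≤ sumUpTo i m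

/-- The fallback value `j` is never taken for a Łukasiewicz path (`returnTimes_nonempty`). -/
def closer (i : Fin n → ℤ) (j : Fin n) : Fin n :=
  if h : (returnTimes i j).Nonempty then (returnTimes i j).min' h else j

section Closer

variable {i : Fin n → ℤ} {j m : Fin n}

lemma closer_eq_of_isLeast (h : IsLeast (returnTimes i j : Set (Fin n)) m) : closer i j = m := by
  rw [closer, dif_pos ⟨m, h.1⟩]
  exact (isLeast_min' _ _).unique h

lemma closer_le_of_mem_returnTimes (hm : m ∈ returnTimes i j) : closer i j ≤ m := by
  rw [closer, dif_pos ⟨m, hm⟩]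
  exact min'_le _ _ hm

lemma sumBelow_lt_of_lt_of_le_closer {k : ℕ} (hjk : j < k) (hk : k ≤ closer i j) :
    sumBelow i k < sumBelow i j := by
  let m : Fin n := ⟨k - 1, by omega⟩
  by_contra! hle
  have hm : m ∈ returnTimes i j := by
    refine mem_filter.2 ⟨mem_univ _, Fin.le_def.2 (by simp only [m]; omega), ?_⟩
    rwa [sumUpTo_eq_sumBelow_succ, show (m : ℕ) + 1 = k by simp only [m]; omega]
  have := Fin.le_def.1 (closer_le_of_mem_returnTimes hm)
  simp only [m] at this
  omega

lemma sumBelow_le_of_le_of_le_closer {k : ℕ} (hjk : j ≤ k) (hk : k ≤ closer i j) :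
    sumBelow i k ≤ sumBelow i j := by
  rcases hjk.eq_or_lt with rfl | hjk
  · rfl
  · exact (sumBelow_lt_of_lt_of_le_closer hjk hk).le

variable (hi : IsLukasiewiczPath i)
include hi

lemma returnTimes_nonempty (j : Fin n) : (returnTimes i j).Nonempty := by
  have hn : 0 < n := j.pos
  let last : Fin n := ⟨n - 1, by omega⟩
  refine ⟨last, mem_filter.2 ⟨mem_univ _, Fin.le_def.2 (by simp only [last]; omega), ?_⟩⟩
  rw [sumUpTo_eq_sumBelow_succ, sumBelow_of_le i (k := last + 1) (by simp only [last]; omega),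
    hi.sum_eq_zero]
  exact hi.sumBelow_nonpos j

lemma closer_mem_returnTimes (j : Fin n) : closer i j ∈ returnTimes i j := by
  rw [closer, dif_pos (returnTimes_nonempty hi j)]
  exact min'_mem _ _

lemma le_closer (j : Fin n) : j ≤ closer i j :=
  (mem_filter.1 (closer_mem_returnTimes hi j)).2.1

lemma sumBelow_le_sumUpTo_closer (j : Fin n) : sumBelow i j ≤ sumUpTo i (closer i j) :=
  (mem_filter.1 (closer_mem_returnTimes hi j)).2.2

lemma closer_eq_self_iff : closer i m = m ↔ 0 ≤ i m := by
  constructor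
  · intro h
    have := sumBelow_le_sumUpTo_closer hi m
    rw [h, sumUpTo_eq_sumBelow_add] at this
    omega
  · intro h
    refine le_antisymm (closer_le_of_mem_returnTimes (mem_filter.2 ⟨mem_univ _, le_rfl, ?_⟩))
      (le_closer hi m)
    rw [sumUpTo_eq_sumBelow_add]
    omega

lemma isNested_closer : IsNested (closer i) where
  le_apply := le_closer hi
  apply_le_apply j _ hjj' hj' := closer_le_of_mem_returnTimes <| mem_filter.2
    ⟨mem_univ _, hj', (sumBelow_le_of_le_of_le_closer hjj' hj').trans
      (sumBelow_le_sumUpTo_closer hi j)⟩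

lemma exists_closer_eq_sumBelow_eq {v : ℤ} (hv : sumBelow i m ≤ v) (hv' : v ≤ sumUpTo i m) :
    ∃ x, closer i x = m ∧ sumBelow i x = v := by
  -- `x` is the last time `k ≤ m` at which the path is still at level `v` or above
  set k := Nat.findGreatest (fun k => v ≤ sumBelow i k) m
  have hkm : k ≤ m := Nat.findGreatest_le _
  have hk : v ≤ sumBelow i k :=
    Nat.findGreatest_spec (P := fun k => v ≤ sumBelow i k) (Nat.zero_le _)
      (by simpa using hv'.trans (hi.sumUpTo_nonpos m))
  have hgt : ∀ k', k < k' → k' ≤ m → sumBelow i k' < v := fun k' h₁ h₂ =>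
    not_le.1 (Nat.findGreatest_is_greatest h₁ h₂)
  let x : Fin n := ⟨k, by omega⟩
  have hx : sumBelow i x = v := by
    refine le_antisymm ?_ hk
    rcases hkm.eq_or_lt with hkm | hkm
    · simpa [x, hkm] using hv
    · have hstep := sumUpTo_eq_sumBelow_add i x
      rw [sumUpTo_eq_sumBelow_succ] at hstep
      have := hgt (k + 1) (by omega) hkm
      have := hi.neg_one_le x
      simp only [x] at *
      omega
  refine ⟨x, closer_eq_of_isLeast ⟨?_, fun m' hm' => ?_⟩, hx⟩
  · exact mem_filter.2 ⟨mem_univ _, hkm, hx ▸ hv'⟩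
  · obtain ⟨-, hxm', hm'⟩ := mem_filter.1 hm'
    by_contra! hlt
    rw [sumUpTo_eq_sumBelow_succ, hx] at hm'
    have := hgt (m' + 1) (by simp only [x, Fin.le_def] at hxm'; omega) (Fin.lt_def.1 hlt)
    omega

lemma card_filter_closer_eq (hm : 0 ≤ i m) :
    (#(univ.filter (closer i · = m)) : ℤ) = i m + 1 := by
  suffices #(univ.filter (closer i · = m)) = #(Icc (sumBelow i m) (sumUpTo i m)) by
    rw [this, Int.card_Icc, sumUpTo_eq_sumBelow_add]
    omega
  refine card_nbij (fun x => sumBelow i x) (fun x hx => ?_) (fun x hx y hy hxy => ?_)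
    (fun v hv => ?_)
  · have hx : closer i x = m := (mem_filter.1 hx).2
    refine mem_Icc.2 ⟨sumBelow_le_of_le_of_le_closer (hx ▸ le_closer hi x) (hx ▸ le_rfl), ?_⟩
    exact hx ▸ sumBelow_le_sumUpTo_closer hi x
  · have hx : closer i x = m := (mem_filter.1 hx).2
    have hy : closer i y = m := (mem_filter.1 hy).2
    by_contra hne
    rcases lt_or_gt_of_ne hne with h | h
    · exact (sumBelow_lt_of_lt_of_le_closer h (hx ▸ hy ▸ le_closer hi y)).ne' hxy
    · exact (sumBelow_lt_of_lt_of_le_closer h (hy ▸ hx ▸ le_closer hi x)).ne hxy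
  · obtain ⟨x, hx, hxv⟩ := exists_closer_eq_sumBelow_eq hi (mem_Icc.1 hv).1 (mem_Icc.1 hv).2
    exact ⟨x, by simp [hx], hxv⟩

end Closer

def fibers (c : Fin n → Fin n) : Finset (Finset (Fin n)) :=
  univ.image fun j => univ.filter (c · = c j)

section Fibers

variable {c : Fin n → Fin n}

lemma filter_mem_fibers (c : Fin n → Fin n) (x : Fin n) :
    univ.filter (c · = c x) ∈ fibers c :=
  mem_image_of_mem _ (mem_univ x)

lemma eq_filter_of_mem_fibers {V : Finset (Fin n)} {x : Fin n} (hV : V ∈ fibers c)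
    (hx : x ∈ V) : V = univ.filter (c · = c x) := by
  obtain ⟨j, -, rfl⟩ := mem_image.1 hV
  ext y
  simp_all

lemma isPartition_fibers (c : Fin n → Fin n) : IsPartition (fibers c) := by
  refine ⟨fun V hV => ?_, fun x => ⟨_, ⟨filter_mem_fibers c x, by simp⟩, ?_⟩⟩
  · obtain ⟨j, -, rfl⟩ := mem_image.1 hV
    exact ⟨j, by simp⟩
  · rintro V ⟨hV, hx⟩
    exact eq_filter_of_mem_fibers hV hx

lemma noCrossing_fibers (hc : IsNested c) : NoCrossing (fibers c) := by
  rintro ⟨p₁, q₁, p₂, q₂, h₁₂, h₂₃, h₃₄, ⟨V, hV, hp₁, hp₂⟩, ⟨W, hW, hq₁, hq₂⟩, hpq⟩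
  have hp : c p₂ = c p₁ := by simpa [eq_filter_of_mem_fibers hV hp₁] using hp₂
  have hq : c q₂ = c q₁ := by simpa [eq_filter_of_mem_fibers hW hq₁] using hq₂
  have hq₁p : c q₁ ≤ c p₁ :=
    hc.apply_le_apply h₁₂.le (h₂₃.le.trans (hp ▸ hc.le_apply p₂))
  have hp₁q : c p₁ ≤ c q₁ :=
    hp ▸ hc.apply_le_apply h₂₃.le (h₃₄.le.trans (hq ▸ hc.le_apply q₂))
  refine hpq ⟨V, hV, hp₁, ?_⟩
  rw [eq_filter_of_mem_fibers hV hp₁]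
  simpa using le_antisymm hq₁p hp₁q

lemma pathOf_fibers (hc : IsNested c) (m : Fin n) :
    pathOf (fibers c) m = if c m = m then (#(univ.filter (c · = m)) : ℤ) - 1 else -1 := by
  split_ifs with hm
  · have hex : ∃ V, V ∈ fibers c ∧ m ∈ V ∧ ∀ j ∈ V, j ≤ m :=
      ⟨_, filter_mem_fibers c m, by simp, fun j hj => by
        simpa [hm, (mem_filter.1 hj).2] using hc.le_apply j⟩
    rw [pathOf, dif_pos hex, eq_filter_of_mem_fibers hex.choose_spec.1 hex.choose_spec.2.1, hm]
  · rw [pathOf, dif_neg]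
    rintro ⟨V, hV, hmV, hle⟩
    have hcm : c m ∈ V := by
      rw [eq_filter_of_mem_fibers hV hmV]
      simp [hc.apply_apply]
    exact hm (le_antisymm (hle _ hcm) (hc.le_apply m))

lemma sumBelow_pathOf_fibers (hc : IsNested c) (k : ℕ) :
    sumBelow (pathOf (fibers c)) k
      = -#(univ.filter fun x : Fin n => (x : ℕ) < k ∧ k ≤ c x) := by
  set below := univ.filter fun x : Fin n => (x : ℕ) < k
  -- a fibre closed before `k` is counted at its last element `j = c j`
  have hclosed : #(univ.filter fun x : Fin n => (c x : ℕ) < k)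
      = ∑ j ∈ below.filter (fun j => c j = j), #(univ.filter (c · = j)) := by
    rw [card_eq_sum_card_fiberwise (f := c) (t := below.filter fun j => c j = j)
      fun x hx => by simpa [below, hc.apply_apply] using hx]
    refine sum_congr rfl fun j hj => congrArg card ?_
    ext x
    simp only [below, mem_filter, mem_univ, true_and] at hj ⊢
    exact ⟨And.right, fun hx => ⟨hx ▸ hj.1, hx⟩⟩
  have hsplit : #below = #(univ.filter fun x : Fin n => (c x : ℕ) < k)
      + #(univ.filter fun x : Fin n => (x : ℕ) < k ∧ k ≤ c x) := by
    rw [← card_filter_add_card_filter_not (s := below) (fun x => (c x : ℕ) < k)]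
    congr 2 <;> ext x <;> simp only [below, mem_filter, mem_univ, true_and, not_lt]
    · exact ⟨And.right, fun hx => ⟨lt_of_le_of_lt (hc.le_apply x) hx, hx⟩⟩
  have hpath : ∀ j, pathOf (fibers c) j
      = (if c j = j then (#(univ.filter (c · = j)) : ℤ) else 0) - 1 := by
    intro j
    rw [pathOf_fibers hc]
    split_ifs <;> simp
  rw [sumBelow, sum_congr rfl fun j _ => hpath j, sum_sub_distrib, ← sum_filter,
    ← Nat.cast_sum, ← hclosed, sum_const, nsmul_one, hsplit]
  push_cast
  ring

lemma isLukasiewiczPath_pathOf_fibers (hc : IsNested c) :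
    IsLukasiewiczPath (pathOf (fibers c)) where
  neg_one_le m := by
    rw [pathOf_fibers hc]
    split_ifs with hm
    · have : 0 < #(univ.filter (c · = m)) := card_pos.2 ⟨m, by simp [hm]⟩
      omega
    · rfl
  sumUpTo_nonpos m := by
    rw [sumUpTo_eq_sumBelow_succ, sumBelow_pathOf_fibers hc]
    exact neg_nonpos.2 (Nat.cast_nonneg _)
  sum_eq_zero := by
    rw [← sumBelow_of_le _ le_rfl, sumBelow_pathOf_fibers hc, filter_false_of_mem fun x _ h =>
      (c x).isLt.not_ge h.2]
    simp

lemma pathOf_fibers_le (hc : IsNested c) (m : Fin n) : pathOf (fibers c) m ≤ n - 1 := by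
  rw [pathOf_fibers hc]
  have : #(univ.filter (c · = m)) ≤ n := (card_le_univ _).trans_eq (Fintype.card_fin n)
  split_ifs <;> omega

end Fibers

lemma pathOf_fibers_closer {i : Fin n → ℤ} (hi : IsLukasiewiczPath i) :
    pathOf (fibers (closer i)) = i := by
  funext m
  rw [pathOf_fibers (isNested_closer hi)]
  by_cases hm : 0 ≤ i m
  · rw [if_pos ((closer_eq_self_iff hi).2 hm), card_filter_closer_eq hi hm]
    ring
  · rw [if_neg (mt (closer_eq_self_iff hi).1 hm)]
    linarith [hi.neg_one_le m]

lemma closer_pathOf_fibers {c : Fin n → Fin n} (hc : IsNested c) :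
    closer (pathOf (fibers c)) = c := by
  funext j
  refine closer_eq_of_isLeast ⟨mem_filter.2 ⟨mem_univ _, hc.le_apply j, ?_⟩, fun m hm => ?_⟩
  · rw [sumUpTo_eq_sumBelow_succ, sumBelow_pathOf_fibers hc, sumBelow_pathOf_fibers hc,
      neg_le_neg_iff, Nat.cast_le]
    refine card_le_card fun x hx => ?_
    simp only [mem_filter, mem_univ, true_and] at hx ⊢
    have hjx : (x : ℕ) < j := by
      by_contra! hjx
      have := hc.apply_le_apply (Fin.le_def.2 hjx) (Fin.le_def.2 (by omega))
      rw [Fin.le_def] at this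
      omega
    exact ⟨hjx, by have := Fin.le_def.1 (hc.le_apply j); omega⟩
  · obtain ⟨-, hjm, hm⟩ := mem_filter.1 hm
    by_contra! hlt
    rw [sumUpTo_eq_sumBelow_succ, sumBelow_pathOf_fibers hc, sumBelow_pathOf_fibers hc,
      neg_le_neg_iff, Nat.cast_le] at hm
    refine hm.not_gt (card_lt_card ((ssubset_iff_of_subset fun x hx => ?_).2 ⟨j, ?_, ?_⟩))
    · simp only [mem_filter, mem_univ, true_and] at hx ⊢
      have := Fin.le_def.1 (hc.apply_le_apply (Fin.le_def.2 hx.1.le) (Fin.le_def.2 hx.2))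
      rw [Fin.le_def, Fin.lt_def] at *
      omega
    · simp only [mem_filter, mem_univ, true_and]
      rw [Fin.le_def, Fin.lt_def] at *
      omega
    · simp

def block (π : Finset (Finset (Fin n))) (x : Fin n) : Finset (Fin n) :=
  univ.filter fun y => ∃ V ∈ π, x ∈ V ∧ y ∈ V

def blockMax (π : Finset (Finset (Fin n))) (x : Fin n) : Fin n :=
  if h : (block π x).Nonempty then (block π x).max' h else x

lemma le_blockMax {π : Finset (Finset (Fin n))} {x y : Fin n} (hy : y ∈ block π x) :
    y ≤ blockMax π x := by
  rw [blockMax, dif_pos ⟨y, hy⟩]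
  exact le_max' _ _ hy

lemma mem_NCPartitions {π : Finset (Finset (Fin n))} :
    π ∈ NCPartitions n ↔ IsPartition π ∧ NoCrossing π := by
  simp [NCPartitions]

section Partition

variable {π : Finset (Finset (Fin n))} (hπ : IsPartition π)
include hπ

lemma block_eq {V : Finset (Fin n)} {x : Fin n} (hV : V ∈ π) (hx : x ∈ V) : block π x = V := by
  ext y
  simp only [block, mem_filter, mem_univ, true_and]
  refine ⟨fun ⟨W, hW, hxW, hyW⟩ => ?_, fun hy => ⟨V, hV, hx, hy⟩⟩
  rwa [(hπ.2 x).unique ⟨hW, hxW⟩ ⟨hV, hx⟩] at hyW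

lemma block_mem_and_mem_block (x : Fin n) : block π x ∈ π ∧ x ∈ block π x := by
  obtain ⟨V, ⟨hV, hx⟩, -⟩ := hπ.2 x
  rw [block_eq hπ hV hx]
  exact ⟨hV, hx⟩

lemma blockMax_mem_block (x : Fin n) : blockMax π x ∈ block π x := by
  rw [blockMax, dif_pos ⟨x, (block_mem_and_mem_block hπ x).2⟩]
  exact max'_mem _ _

lemma blockMax_eq_blockMax_iff {x y : Fin n} : blockMax π y = blockMax π x ↔ y ∈ block π x := by
  have hblock : ∀ x, block π (blockMax π x) = block π x := fun x =>
    block_eq hπ (block_mem_and_mem_block hπ x).1 (blockMax_mem_block hπ x)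
  constructor
  · intro h
    rw [← hblock x, ← h, hblock y]
    exact (block_mem_and_mem_block hπ y).2
  · intro hy
    rw [blockMax, blockMax, block_eq hπ (block_mem_and_mem_block hπ x).1 hy, dif_pos ⟨y, hy⟩,
      dif_pos ⟨y, hy⟩]

lemma fibers_blockMax : fibers (blockMax π) = π := by
  have hfiber : ∀ x, univ.filter (blockMax π · = blockMax π x) = block π x := fun x => by
    ext y
    simp [blockMax_eq_blockMax_iff hπ]
  ext V
  simp only [fibers, mem_image, mem_univ, true_and, hfiber]
  refine ⟨fun ⟨x, hx⟩ => hx ▸ (block_mem_and_mem_block hπ x).1, fun hV => ?_⟩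
  obtain ⟨x, hx⟩ := hπ.1 V hV
  exact ⟨x, block_eq hπ hV hx⟩

lemma isNested_blockMax (hnc : NoCrossing π) : IsNested (blockMax π) where
  le_apply x := le_blockMax (block_mem_and_mem_block hπ x).2
  apply_le_apply x y hxy hy := by
    by_contra! hlt
    have hyx : y ∉ block π x := fun h => hlt.ne ((blockMax_eq_blockMax_iff hπ).2 h).symm
    have hx := block_mem_and_mem_block hπ x
    have hy' := block_mem_and_mem_block hπ y
    refine hnc ⟨x, y, blockMax π x, blockMax π y, lt_of_le_of_ne hxy ?_, lt_of_le_of_ne hy ?_,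
      hlt, ⟨_, hx.1, hx.2, blockMax_mem_block hπ x⟩, ⟨_, hy'.1, hy'.2, blockMax_mem_block hπ y⟩,
      fun ⟨V, hV, hxV, hyV⟩ => hyx (block_eq hπ hV hxV ▸ hyV)⟩
    · rintro rfl
      exact hyx hx.2
    · rintro rfl
      exact hyx (blockMax_mem_block hπ x)

end Partition

lemma fibers_closer_pathOf {π : Finset (Finset (Fin n))} (hπ : π ∈ NCPartitions n) :
    fibers (closer (pathOf π)) = π := by
  obtain ⟨hπ, hnc⟩ := mem_NCPartitions.1 hπ
  calc fibers (closer (pathOf π))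
      = fibers (closer (pathOf (fibers (blockMax π)))) := by rw [fibers_blockMax hπ]
    _ = π := by rw [closer_pathOf_fibers (isNested_blockMax hπ hnc), fibers_blockMax hπ]

end NCPartitionPath

open NCPartitionPath in
/-- The map `pathOf` is a bijection from non-crossing partitions of {1,…,n} onto lattice
paths `(i 1, …, i n)` with steps in {-1,0,…,n-1}, partial sums ≤ 0 and total sum 0. -/
theorem ncPartitions_bij_paths (n : ℕ) :
    Set.BijOn (fun π => pathOf π)
      {π | π ∈ NCPartitions n}
      {i : Fin n → ℤ |
        (∀ m, -1 ≤ i m ∧ i m ≤ (n : ℤ) - 1) ∧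
        (∀ m : Fin n, ∑ j ∈ Finset.univ.filter (· ≤ m), i j ≤ 0) ∧
        (∑ j, i j = 0)} := by
  refine ⟨fun π hπ => ?_, fun π₁ h₁ π₂ h₂ h => ?_, fun i ⟨hb, hs, ht⟩ => ?_⟩
  · obtain ⟨hP, hnc⟩ := mem_NCPartitions.1 hπ
    have hc := isNested_blockMax hP hnc
    have hi := isLukasiewiczPath_pathOf_fibers hc
    have hle := pathOf_fibers_le hc
    rw [fibers_blockMax hP] at hi hle
    exact ⟨fun m => ⟨hi.neg_one_le m, hle m⟩, hi.sumUpTo_nonpos, hi.sum_eq_zero⟩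
  · rw [← fibers_closer_pathOf h₁, ← fibers_closer_pathOf h₂]
    exact congrArg (fibers ∘ closer) h
  · have hi : IsLukasiewiczPath i := ⟨fun m => (hb m).1, hs, ht⟩
    exact ⟨fibers (closer i), mem_NCPartitions.2 ⟨isPartition_fibers _,
      noCrossing_fibers (isNested_closer hi)⟩, pathOf_fibers_closer hi⟩
end

section
/- Let (m_n)_{n≥1} and (k_n)_{n≥1} be sequences of complex numbers with m_0 = 1. Then the moment-cumulant relation m_n = Σ_{π ∈ NC(n)} Π_{V ∈ π} k_{#V} holds for all n if and only if the recursion m_n = Σ_{s=1}^{n} Σ_{i_1+⋯+i_s = n−s, i_j ≥ 0} k_s · m_{i_1} ⋯ m_{i_s} holds for all n ≥ 1. -/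
open scoped Classical


open scoped Classical

namespace MCAux

open Finset

lemma mem_NCPartitions {n : ℕ} {π : Finset (Finset (Fin n))} :
    π ∈ NCPartitions n ↔ IsPartition π ∧ NoCrossing π := by
  simp [NCPartitions]

lemma NCPartitions_zero : NCPartitions 0 = {∅} := by
  ext π
  simp only [mem_NCPartitions, mem_singleton]
  constructor
  · rintro ⟨⟨h1, -⟩, -⟩
    ext V
    simp only [notMem_empty, iff_false]
    intro hV
    obtain ⟨x, -⟩ := h1 V hV
    exact x.elim0
  · rintro rfl
    refine ⟨⟨fun V hV => absurd hV (notMem_empty V), fun i => i.elim0⟩, ?_⟩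
    rintro ⟨p, -⟩
    exact p.elim0

noncomputable def blk0 {n : ℕ} (π : Finset (Finset (Fin n))) : Finset (Fin n) :=
  if h : ∃ V ∈ π, ∃ x ∈ V, (x : ℕ) = 0 then h.choose else ∅

lemma blk0_spec {n : ℕ} {π : Finset (Finset (Fin n))}
    (h : ∃ V ∈ π, ∃ x ∈ V, (x : ℕ) = 0) :
    blk0 π ∈ π ∧ ∃ x ∈ blk0 π, (x : ℕ) = 0 := by
  rw [blk0, dif_pos h]; exact h.choose_spec

lemma blk0_empty {n : ℕ} : blk0 (∅ : Finset (Finset (Fin n))) = ∅ := by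
  rw [blk0, dif_neg]; rintro ⟨V, hV, -⟩; exact absurd hV (notMem_empty V)

lemma blk0_eq {n : ℕ} {π : Finset (Finset (Fin n))} (hπ : IsPartition π)
    {V : Finset (Fin n)} (hV : V ∈ π) {x : Fin n} (hx : x ∈ V) (hx0 : (x : ℕ) = 0) :
    blk0 π = V := by
  have h : ∃ V ∈ π, ∃ x ∈ V, (x : ℕ) = 0 := ⟨V, hV, x, hx, hx0⟩
  obtain ⟨h1, y, hy, hy0⟩ := blk0_spec h
  have hxy : y = x := Fin.ext (by omega)
  subst hxy
  obtain ⟨W, -, huniq⟩ := hπ.2 y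
  rw [huniq _ ⟨h1, hy⟩, huniq _ ⟨hV, hx⟩]

/-- the block of a partition containing a given element, with uniqueness -/
lemma block_unique {n : ℕ} {π : Finset (Finset (Fin n))} (hπ : IsPartition π)
    {V W : Finset (Fin n)} (hV : V ∈ π) (hW : W ∈ π) {x : Fin n}
    (hxV : x ∈ V) (hxW : x ∈ W) : V = W := by
  obtain ⟨U, -, huniq⟩ := hπ.2 x
  rw [huniq _ ⟨hV, hxV⟩, huniq _ ⟨hW, hxW⟩]

noncomputable def Am (k : ℕ → ℂ) (n : ℕ) : ℂ :=
  ∑ π ∈ NCPartitions n, ∏ V ∈ π, k V.card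

noncomputable def Tr (k : ℕ → ℂ) (r n : ℕ) : ℂ :=
  ∑ π ∈ NCPartitions n, k ((blk0 π).card + r) * ∏ V ∈ π.erase (blk0 π), k V.card

lemma Am_zero (k : ℕ → ℂ) : Am k 0 = 1 := by
  simp [Am, NCPartitions_zero]

lemma Tr_zero (k : ℕ → ℂ) (r : ℕ) : Tr k r 0 = k r := by
  simp [Tr, NCPartitions_zero, blk0_empty]

lemma blk0_mem {n : ℕ} (hn : 1 ≤ n) {π : Finset (Finset (Fin n))} (hπ : IsPartition π) :
    blk0 π ∈ π ∧ (⟨0, hn⟩ : Fin n) ∈ blk0 π := by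
  obtain ⟨V, ⟨hV, hxV⟩, -⟩ := hπ.2 ⟨0, hn⟩
  have h : ∃ V ∈ π, ∃ x ∈ V, (x : ℕ) = 0 := ⟨V, hV, ⟨0, hn⟩, hxV, rfl⟩
  obtain ⟨h1, y, hy, hy0⟩ := blk0_spec h
  refine ⟨h1, ?_⟩
  have : y = ⟨0, hn⟩ := Fin.ext hy0
  rwa [this] at hy

lemma Am_eq_Tr (k : ℕ → ℂ) {n : ℕ} (hn : 1 ≤ n) : Am k n = Tr k 0 n := by
  refine Finset.sum_congr rfl fun π hπ => ?_
  obtain ⟨hP, -⟩ := mem_NCPartitions.mp hπ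
  obtain ⟨h1, -⟩ := blk0_mem hn hP
  rw [add_zero, ← Finset.mul_prod_erase π (fun V => k V.card) h1]

end MCAux

namespace MCAux
open Finset

def emb1 (n v : ℕ) (hv : v ≤ n) : Fin (v - 1) → Fin n :=
  fun x => ⟨x.1 + 1, by omega⟩

def emb2 (n v : ℕ) : Fin (n - v) → Fin n :=
  fun x => ⟨x.1 + v, by omega⟩

lemma emb1_inj {n v : ℕ} (hv : v ≤ n) : Function.Injective (emb1 n v hv) := by
  intro a b h
  have := congrArg Fin.val h
  simp only [emb1] at this
  exact Fin.ext (by omega)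

lemma emb2_inj {n v : ℕ} : Function.Injective (emb2 n v) := by
  intro a b h
  have := congrArg Fin.val h
  simp only [emb2] at this
  exact Fin.ext (by omega)

lemma emb1_lt_iff {n v : ℕ} (hv : v ≤ n) {a b : Fin (v - 1)} :
    emb1 n v hv a < emb1 n v hv b ↔ a < b := by
  simp only [emb1, Fin.lt_def]; omega

lemma emb2_lt_iff {n v : ℕ} {a b : Fin (n - v)} :
    emb2 n v a < emb2 n v b ↔ a < b := by
  simp only [emb2, Fin.lt_def]; omega

noncomputable def glue (n : ℕ) (hn : 1 ≤ n) (v : ℕ) (hv : v ≤ n)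
    (π₁ : Finset (Finset (Fin (v - 1)))) (π₂ : Finset (Finset (Fin (n - v)))) :
    Finset (Finset (Fin n)) :=
  insert (insert ⟨0, hn⟩ ((blk0 π₂).image (emb2 n v)))
    (π₁.image (fun V => V.image (emb1 n v hv)) ∪
      (π₂.erase (blk0 π₂)).image (fun V => V.image (emb2 n v)))

section Glue

variable {n v : ℕ} (hn : 1 ≤ n) (hv1 : 1 ≤ v) (hv : v ≤ n)
variable {π₁ : Finset (Finset (Fin (v - 1)))} {π₂ : Finset (Finset (Fin (n - v)))}

-- element bounds
lemma mem_img1 {X : Finset (Fin (v - 1))} {x : Fin n} (hx : x ∈ X.image (emb1 n v hv)) :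
    1 ≤ (x : ℕ) ∧ (x : ℕ) < v := by
  obtain ⟨a, -, rfl⟩ := Finset.mem_image.mp hx
  simp only [emb1]
  omega

lemma mem_img2 {X : Finset (Fin (n - v))} {x : Fin n} (hx : x ∈ X.image (emb2 n v)) :
    v ≤ (x : ℕ) := by
  obtain ⟨a, -, rfl⟩ := Finset.mem_image.mp hx
  simp only [emb2]
  omega

lemma mem_B0 {x : Fin n}
    (hx : x ∈ insert (⟨0, hn⟩ : Fin n) ((blk0 π₂).image (emb2 n v))) :
    (x : ℕ) = 0 ∨ v ≤ (x : ℕ) := by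
  rcases Finset.mem_insert.mp hx with h | h
  · left; rw [h]
  · right; exact mem_img2 h

lemma mem_glue_iff {U : Finset (Fin n)} :
    U ∈ glue n hn v hv π₁ π₂ ↔
      U = insert ⟨0, hn⟩ ((blk0 π₂).image (emb2 n v)) ∨
      (∃ X ∈ π₁, U = X.image (emb1 n v hv)) ∨
      (∃ X ∈ π₂.erase (blk0 π₂), U = X.image (emb2 n v)) := by
  simp only [glue, Finset.mem_insert, Finset.mem_union, Finset.mem_image]
  constructor
  · rintro (h | ⟨X, hX, rfl⟩ | ⟨X, hX, rfl⟩)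
    · exact Or.inl h
    · exact Or.inr (Or.inl ⟨X, hX, rfl⟩)
    · exact Or.inr (Or.inr ⟨X, hX, rfl⟩)
  · rintro (h | ⟨X, hX, rfl⟩ | ⟨X, hX, rfl⟩)
    · exact Or.inl h
    · exact Or.inr (Or.inl ⟨X, hX, rfl⟩)
    · exact Or.inr (Or.inr ⟨X, hX, rfl⟩)

end Glue
end MCAux

namespace MCAux
open Finset

section Glue2
variable {n v : ℕ} (hn : 1 ≤ n) (hv1 : 1 ≤ v) (hv : v ≤ n)
variable {π₁ : Finset (Finset (Fin (v - 1)))} {π₂ : Finset (Finset (Fin (n - v)))}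

lemma glue_isPartition (hv1 : 1 ≤ v) (hπ₁ : IsPartition π₁) (hπ₂ : IsPartition π₂) :
    IsPartition (glue n hn v hv π₁ π₂) := by
  constructor
  · intro U hU
    rcases (mem_glue_iff hn hv).mp hU with rfl | ⟨X, hX, rfl⟩ | ⟨X, hX, rfl⟩
    · exact ⟨⟨0, hn⟩, Finset.mem_insert_self _ _⟩
    · exact (hπ₁.1 X hX).image _
    · exact (hπ₂.1 X (Finset.mem_of_mem_erase hX)).image _
  · intro i
    have hz : ((⟨0, hn⟩ : Fin n) : ℕ) = 0 := rfl
    by_cases h0 : (i : ℕ) = 0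
    · -- i = 0
      have hi : i = ⟨0, hn⟩ := Fin.ext (by omega)
      subst hi
      refine ⟨_, ⟨Finset.mem_insert_self _ _, Finset.mem_insert_self _ _⟩, ?_⟩
      rintro U ⟨hU, hiU⟩
      rcases (mem_glue_iff hn hv).mp hU with rfl | ⟨X, hX, rfl⟩ | ⟨X, hX, rfl⟩
      · rfl
      · have := mem_img1 hv hiU; omega
      · have := mem_img2 hiU; omega
    · by_cases hlt : (i : ℕ) < v
      · -- middle region
        set a : Fin (v - 1) := ⟨(i : ℕ) - 1, by omega⟩ with ha
        have hea : emb1 n v hv a = i := Fin.ext (by simp [emb1, ha]; omega)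
        obtain ⟨X, ⟨hX, haX⟩, huniq⟩ := hπ₁.2 a
        refine ⟨X.image (emb1 n v hv),
          ⟨(mem_glue_iff hn hv).mpr (Or.inr (Or.inl ⟨X, hX, rfl⟩)),
            hea ▸ Finset.mem_image_of_mem _ haX⟩, ?_⟩
        rintro U ⟨hU, hiU⟩
        rcases (mem_glue_iff hn hv).mp hU with rfl | ⟨Y, hY, rfl⟩ | ⟨Y, hY, rfl⟩
        · have := mem_B0 hn hiU; omega
        · obtain ⟨b, hbY, hbe⟩ := Finset.mem_image.mp hiU
          have hba : b = a := emb1_inj hv (by rw [hbe, hea])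
          subst hba
          rw [huniq Y ⟨hY, hbY⟩]
        · have := mem_img2 hiU; omega
      · -- upper region
        set a : Fin (n - v) := ⟨(i : ℕ) - v, by omega⟩ with ha
        have hea : emb2 n v a = i := Fin.ext (by simp [emb2, ha]; omega)
        obtain ⟨X, ⟨hX, haX⟩, huniq⟩ := hπ₂.2 a
        have hin : (i : ℕ) < n := i.isLt
        by_cases hXb : X = blk0 π₂
        · -- block is B0
          refine ⟨_, ⟨(mem_glue_iff hn hv).mpr (Or.inl rfl), Finset.mem_insert.mpr
            (Or.inr (hea ▸ Finset.mem_image_of_mem _ (hXb ▸ haX)))⟩, ?_⟩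
          rintro U ⟨hU, hiU⟩
          rcases (mem_glue_iff hn hv).mp hU with rfl | ⟨Y, hY, rfl⟩ | ⟨Y, hY, rfl⟩
          · rfl
          · have := mem_img1 hv hiU; omega
          · obtain ⟨b, hbY, hbe⟩ := Finset.mem_image.mp hiU
            have hba : b = a := emb2_inj (by rw [hbe, hea])
            subst hba
            have hYX : Y = X := huniq Y ⟨Finset.mem_of_mem_erase hY, hbY⟩
            exact absurd (Finset.mem_erase.mp hY).1 (by rw [hYX, hXb]; exact fun h => h rfl)
        · refine ⟨X.image (emb2 n v),
            ⟨(mem_glue_iff hn hv).mpr (Or.inr (Or.inr ⟨X, Finset.mem_erase.mpr ⟨hXb, hX⟩, rfl⟩)),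
              hea ▸ Finset.mem_image_of_mem _ haX⟩, ?_⟩
          rintro U ⟨hU, hiU⟩
          rcases (mem_glue_iff hn hv).mp hU with rfl | ⟨Y, hY, rfl⟩ | ⟨Y, hY, rfl⟩
          · rcases Finset.mem_insert.mp hiU with h | h
            · have hcon := congrArg Fin.val h
              rw [hz] at hcon; omega
            · obtain ⟨b, hbY, hbe⟩ := Finset.mem_image.mp h
              have hba : b = a := emb2_inj (by rw [hbe, hea])
              subst hba
              have hnv : 1 ≤ n - v := by omega
              exact absurd (huniq _ ⟨(blk0_mem hnv hπ₂).1, hbY⟩).symm hXb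
          · have := mem_img1 hv hiU; omega
          · obtain ⟨b, hbY, hbe⟩ := Finset.mem_image.mp hiU
            have hba : b = a := emb2_inj (by rw [hbe, hea])
            subst hba
            rw [huniq Y ⟨Finset.mem_of_mem_erase hY, hbY⟩]

lemma glue_noCrossing (hv1 : 1 ≤ v) (hπ₂ : IsPartition π₂)
    (hc₁ : NoCrossing π₁) (hc₂ : NoCrossing π₂) : NoCrossing (glue n hn v hv π₁ π₂) := by
  have hB0mem : insert (⟨0, hn⟩ : Fin n) ((blk0 π₂).image (emb2 n v)) ∈ glue n hn v hv π₁ π₂ :=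
    (mem_glue_iff hn hv).mpr (Or.inl rfl)
  have hz : ((⟨0, hn⟩ : Fin n) : ℕ) = 0 := rfl
  rintro ⟨p1, q1, p2, q2, h12, h23, h34, ⟨V, hV, hp1V, hp2V⟩, ⟨W, hW, hq1W, hq2W⟩, hnot⟩
  have v12 : (p1 : ℕ) < (q1 : ℕ) := h12
  have v23 : (q1 : ℕ) < (p2 : ℕ) := h23
  have v34 : (p2 : ℕ) < (q2 : ℕ) := h34
  have hnot₂ : ∀ a c : Fin (n - v), emb2 n v a = p1 → emb2 n v c = q1 →
      ¬∃ U ∈ π₂, a ∈ U ∧ c ∈ U := by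
    rintro a c ha hc ⟨U, hU, haU, hcU⟩
    by_cases hUb : U = blk0 π₂
    · exact hnot ⟨_, hB0mem,
        ha ▸ Finset.mem_insert.mpr (Or.inr (Finset.mem_image_of_mem _ (hUb ▸ haU))),
        hc ▸ Finset.mem_insert.mpr (Or.inr (Finset.mem_image_of_mem _ (hUb ▸ hcU)))⟩
    · exact hnot ⟨U.image (emb2 n v),
        (mem_glue_iff hn hv).mpr (Or.inr (Or.inr ⟨U, Finset.mem_erase.mpr ⟨hUb, hU⟩, rfl⟩)),
        ha ▸ Finset.mem_image_of_mem _ haU, hc ▸ Finset.mem_image_of_mem _ hcU⟩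
  have hnot₁ : ∀ a c : Fin (v - 1), emb1 n v hv a = p1 → emb1 n v hv c = q1 →
      ¬∃ U ∈ π₁, a ∈ U ∧ c ∈ U := by
    rintro a c ha hc ⟨U, hU, haU, hcU⟩
    exact hnot ⟨U.image (emb1 n v hv),
      (mem_glue_iff hn hv).mpr (Or.inr (Or.inl ⟨U, hU, rfl⟩)),
      ha ▸ Finset.mem_image_of_mem _ haU, hc ▸ Finset.mem_image_of_mem _ hcU⟩
  have hVW : V ≠ W := fun h => hnot ⟨V, hV, hp1V, by rw [h]; exact hq1W⟩
  have memB0' : ∀ x : Fin n, x ∈ insert (⟨0, hn⟩ : Fin n) ((blk0 π₂).image (emb2 n v)) →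
      1 ≤ (x : ℕ) → x ∈ (blk0 π₂).image (emb2 n v) := by
    intro x hx h1
    rcases Finset.mem_insert.mp hx with h | h
    · have := congrArg Fin.val h; rw [hz] at this; omega
    · exact h
  rcases (mem_glue_iff hn hv).mp hW with rfl | ⟨X, hX, rfl⟩ | ⟨X, hX, rfl⟩
  · -- W = B0
    obtain ⟨c1, hc1, hc1e⟩ := Finset.mem_image.mp (memB0' q1 hq1W (by omega))
    obtain ⟨c2, hc2, hc2e⟩ := Finset.mem_image.mp (memB0' q2 hq2W (by omega))
    have hq1v : v ≤ (q1 : ℕ) := by rw [← hc1e]; exact mem_img2 (Finset.mem_image_of_mem _ hc1)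
    have hnv : 1 ≤ n - v := by have := q1.isLt; omega
    rcases (mem_glue_iff hn hv).mp hV with rfl | ⟨Y, hY, rfl⟩ | ⟨Y, hY, rfl⟩
    · exact hVW rfl
    · have := mem_img1 hv hp2V; omega
    · obtain ⟨a1, ha1Y, ha1⟩ := Finset.mem_image.mp hp1V
      obtain ⟨a2, ha2Y, ha2⟩ := Finset.mem_image.mp hp2V
      refine hc₂ ⟨a1, c1, a2, c2, ?_, ?_, ?_,
        ⟨Y, Finset.mem_of_mem_erase hY, ha1Y, ha2Y⟩,
        ⟨blk0 π₂, (blk0_mem hnv hπ₂).1, hc1, hc2⟩, hnot₂ a1 c1 ha1 hc1e⟩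
      · exact emb2_lt_iff.mp (by rw [ha1, hc1e]; exact h12)
      · exact emb2_lt_iff.mp (by rw [ha2, hc1e]; exact h23)
      · exact emb2_lt_iff.mp (by rw [ha2, hc2e]; exact h34)
  · -- W = X.image e₁
    have hq1b := mem_img1 hv hq1W
    have hq2b := mem_img1 hv hq2W
    obtain ⟨c1, hc1, hc1e⟩ := Finset.mem_image.mp hq1W
    obtain ⟨c2, hc2, hc2e⟩ := Finset.mem_image.mp hq2W
    rcases (mem_glue_iff hn hv).mp hV with rfl | ⟨Y, hY, rfl⟩ | ⟨Y, hY, rfl⟩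
    · have := mem_B0 hn hp2V; omega
    · obtain ⟨a1, ha1Y, ha1⟩ := Finset.mem_image.mp hp1V
      obtain ⟨a2, ha2Y, ha2⟩ := Finset.mem_image.mp hp2V
      refine hc₁ ⟨a1, c1, a2, c2, ?_, ?_, ?_, ⟨Y, hY, ha1Y, ha2Y⟩,
        ⟨X, hX, hc1, hc2⟩, hnot₁ a1 c1 ha1 hc1e⟩
      · exact (emb1_lt_iff hv).mp (by rw [ha1, hc1e]; exact h12)
      · exact (emb1_lt_iff hv).mp (by rw [ha2, hc1e]; exact h23)
      · exact (emb1_lt_iff hv).mp (by rw [ha2, hc2e]; exact h34)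
    · have := mem_img2 hp2V; omega
  · -- W = X.image e₂, X ∈ erase
    have hq1b := mem_img2 hq1W
    obtain ⟨c1, hc1, hc1e⟩ := Finset.mem_image.mp hq1W
    obtain ⟨c2, hc2, hc2e⟩ := Finset.mem_image.mp hq2W
    have hnv : 1 ≤ n - v := by have := q1.isLt; omega
    have hXπ : X ∈ π₂ := Finset.mem_of_mem_erase hX
    have hXne : X ≠ blk0 π₂ := (Finset.mem_erase.mp hX).1
    rcases (mem_glue_iff hn hv).mp hV with rfl | ⟨Y, hY, rfl⟩ | ⟨Y, hY, rfl⟩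
    · -- V = B0
      obtain ⟨a2, ha2, ha2e⟩ := Finset.mem_image.mp (memB0' p2 hp2V (by omega))
      by_cases hp10 : (p1 : ℕ) = 0
      · -- p1 = 0 : use the zero element of blk0 π₂
        set z : Fin (n - v) := ⟨0, hnv⟩ with hzdef
        have hzmem : z ∈ blk0 π₂ := (blk0_mem hnv hπ₂).2
        have hc1pos : 0 < (c1 : ℕ) := by
          by_contra h
          push_neg at h
          have hcz : c1 = z := Fin.ext (by omega)
          rw [hcz] at hc1
          exact absurd (block_unique hπ₂ hXπ (blk0_mem hnv hπ₂).1 hc1 hzmem) hXne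
        refine hc₂ ⟨z, c1, a2, c2, ?_, ?_, ?_,
          ⟨blk0 π₂, (blk0_mem hnv hπ₂).1, hzmem, ha2⟩, ⟨X, hXπ, hc1, hc2⟩, ?_⟩
        · exact Fin.lt_def.mpr (by simp [hzdef]; omega)
        · exact emb2_lt_iff.mp (by rw [hc1e, ha2e]; exact h23)
        · exact emb2_lt_iff.mp (by rw [ha2e, hc2e]; exact h34)
        · rintro ⟨U, hU, hzU, hc1U⟩
          have hU1 : U = blk0 π₂ := block_unique hπ₂ hU (blk0_mem hnv hπ₂).1 hzU hzmem
          rw [hU1] at hc1U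
          exact hXne (block_unique hπ₂ hXπ (blk0_mem hnv hπ₂).1 hc1 hc1U)
      · obtain ⟨a1, ha1, ha1e⟩ := Finset.mem_image.mp (memB0' p1 hp1V (by omega))
        refine hc₂ ⟨a1, c1, a2, c2, ?_, ?_, ?_,
          ⟨blk0 π₂, (blk0_mem hnv hπ₂).1, ha1, ha2⟩, ⟨X, hXπ, hc1, hc2⟩,
          hnot₂ a1 c1 ha1e hc1e⟩
        · exact emb2_lt_iff.mp (by rw [ha1e, hc1e]; exact h12)
        · exact emb2_lt_iff.mp (by rw [ha2e, hc1e]; exact h23)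
        · exact emb2_lt_iff.mp (by rw [ha2e, hc2e]; exact h34)
    · have := mem_img1 hv hp2V; omega
    · obtain ⟨a1, ha1Y, ha1⟩ := Finset.mem_image.mp hp1V
      obtain ⟨a2, ha2Y, ha2⟩ := Finset.mem_image.mp hp2V
      refine hc₂ ⟨a1, c1, a2, c2, ?_, ?_, ?_,
        ⟨Y, Finset.mem_of_mem_erase hY, ha1Y, ha2Y⟩, ⟨X, hXπ, hc1, hc2⟩,
        hnot₂ a1 c1 ha1 hc1e⟩
      · exact emb2_lt_iff.mp (by rw [ha1, hc1e]; exact h12)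
      · exact emb2_lt_iff.mp (by rw [ha2, hc1e]; exact h23)
      · exact emb2_lt_iff.mp (by rw [ha2, hc2e]; exact h34)


lemma glue_mem (hv1 : 1 ≤ v) (hπ₁ : π₁ ∈ NCPartitions (v - 1)) (hπ₂ : π₂ ∈ NCPartitions (n - v)) :
    glue n hn v hv π₁ π₂ ∈ NCPartitions n := by
  obtain ⟨h1, h2⟩ := mem_NCPartitions.mp hπ₁
  obtain ⟨h3, h4⟩ := mem_NCPartitions.mp hπ₂
  exact mem_NCPartitions.mpr ⟨glue_isPartition hn hv hv1 h1 h3, glue_noCrossing hn hv hv1 h3 h2 h4⟩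

lemma blk0_glue (hv1 : 1 ≤ v) (hπ₁ : IsPartition π₁) (hπ₂ : IsPartition π₂) :
    blk0 (glue n hn v hv π₁ π₂) = insert ⟨0, hn⟩ ((blk0 π₂).image (emb2 n v)) :=
  blk0_eq (glue_isPartition hn hv hv1 hπ₁ hπ₂) ((mem_glue_iff hn hv).mpr (Or.inl rfl))
    (Finset.mem_insert_self _ _) rfl

lemma glue_weight (k : ℕ → ℂ) (r : ℕ) (hv1 : 1 ≤ v)
    (hπ₁ : IsPartition π₁) (hπ₂ : IsPartition π₂) :
    k ((blk0 (glue n hn v hv π₁ π₂)).card + r) *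
      ∏ V ∈ (glue n hn v hv π₁ π₂).erase (blk0 (glue n hn v hv π₁ π₂)), k V.card =
    (∏ V ∈ π₁, k V.card) *
      (k ((blk0 π₂).card + (r + 1)) * ∏ V ∈ π₂.erase (blk0 π₂), k V.card) := by
  have hz : ((⟨0, hn⟩ : Fin n) : ℕ) = 0 := rfl
  rw [blk0_glue hn hv hv1 hπ₁ hπ₂]
  have h0img : (⟨0, hn⟩ : Fin n) ∉ (blk0 π₂).image (emb2 n v) := by
    intro h; have := mem_img2 h; omega
  have hcard : (insert (⟨0, hn⟩ : Fin n) ((blk0 π₂).image (emb2 n v))).card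
      = (blk0 π₂).card + 1 := by
    rw [Finset.card_insert_of_notMem h0img, Finset.card_image_of_injective _ emb2_inj]
  have h0un : insert (⟨0, hn⟩ : Fin n) ((blk0 π₂).image (emb2 n v)) ∉
      π₁.image (fun V => V.image (emb1 n v hv)) ∪
        (π₂.erase (blk0 π₂)).image (fun V => V.image (emb2 n v)) := by
    intro h
    rcases Finset.mem_union.mp h with h | h
    · obtain ⟨X, hX, hXe⟩ := Finset.mem_image.mp h
      have : (⟨0, hn⟩ : Fin n) ∈ X.image (emb1 n v hv) := by
        rw [hXe]; exact Finset.mem_insert_self _ _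
      have := mem_img1 hv this; omega
    · obtain ⟨X, hX, hXe⟩ := Finset.mem_image.mp h
      have : (⟨0, hn⟩ : Fin n) ∈ X.image (emb2 n v) := by
        rw [hXe]; exact Finset.mem_insert_self _ _
      have := mem_img2 this; omega
  have herase : (glue n hn v hv π₁ π₂).erase
        (insert (⟨0, hn⟩ : Fin n) ((blk0 π₂).image (emb2 n v)))
      = π₁.image (fun V => V.image (emb1 n v hv)) ∪
        (π₂.erase (blk0 π₂)).image (fun V => V.image (emb2 n v)) := by
    rw [glue, Finset.erase_insert h0un]
  rw [herase, hcard]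
  have hdisj : Disjoint (π₁.image (fun V => V.image (emb1 n v hv)))
      ((π₂.erase (blk0 π₂)).image (fun V => V.image (emb2 n v))) := by
    rw [Finset.disjoint_left]
    intro U hU1 hU2
    obtain ⟨X, hX, rfl⟩ := Finset.mem_image.mp hU1
    obtain ⟨Y, hY, hYe⟩ := Finset.mem_image.mp hU2
    obtain ⟨x, hx⟩ := hπ₁.1 X hX
    have hx1 := mem_img1 hv (Finset.mem_image_of_mem _ hx : emb1 n v hv x ∈ X.image (emb1 n v hv))
    have : emb1 n v hv x ∈ Y.image (emb2 n v) := by rw [hYe]; exact Finset.mem_image_of_mem _ hx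
    have := mem_img2 this; omega
  rw [Finset.prod_union hdisj]
  have hprod1 : ∏ U ∈ π₁.image (fun V => V.image (emb1 n v hv)), k U.card
      = ∏ V ∈ π₁, k V.card := by
    rw [Finset.prod_image]
    · exact Finset.prod_congr rfl fun X _ => by
        rw [Finset.card_image_of_injective _ (emb1_inj hv)]
    · intro X _ Y _ h
      exact Finset.image_injective (emb1_inj hv) h
  have hprod2 : ∏ U ∈ (π₂.erase (blk0 π₂)).image (fun V => V.image (emb2 n v)), k U.card
      = ∏ V ∈ π₂.erase (blk0 π₂), k V.card := by
    rw [Finset.prod_image]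
    · exact Finset.prod_congr rfl fun X _ => by
        rw [Finset.card_image_of_injective _ emb2_inj]
    · intro X _ Y _ h
      exact Finset.image_injective emb2_inj h
  rw [hprod1, hprod2, Nat.add_assoc]
  ring


lemma glue_v_eq {v' : ℕ} (hv1 : 1 ≤ v) (hv1' : 1 ≤ v') (hv' : v' ≤ n)
    {π₁' : Finset (Finset (Fin (v' - 1)))} {π₂' : Finset (Finset (Fin (n - v')))}
    (hπ₁ : IsPartition π₁) (hπ₂ : IsPartition π₂)
    (hπ₁' : IsPartition π₁') (hπ₂' : IsPartition π₂')
    (heq : glue n hn v hv π₁ π₂ = glue n hn v' hv' π₁' π₂') : v = v' := by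
  have hB : insert (⟨0, hn⟩ : Fin n) ((blk0 π₂).image (emb2 n v))
      = insert (⟨0, hn⟩ : Fin n) ((blk0 π₂').image (emb2 n v')) := by
    rw [← blk0_glue hn hv hv1 hπ₁ hπ₂, ← blk0_glue hn hv' hv1' hπ₁' hπ₂', heq]
  have key : ∀ (w w' : ℕ) (hww : w ≤ n) (hww' : w' ≤ n)
      (ρ₂ : Finset (Finset (Fin (n - w)))) (ρ₂' : Finset (Finset (Fin (n - w')))),
      1 ≤ w' → IsPartition ρ₂' →
      insert (⟨0, hn⟩ : Fin n) ((blk0 ρ₂).image (emb2 n w))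
        = insert (⟨0, hn⟩ : Fin n) ((blk0 ρ₂').image (emb2 n w')) →
      w' < w → False := by
    intro w w' hww hww' ρ₂ ρ₂' h1' hP' hB hlt
    have hnv' : 1 ≤ n - w' := by omega
    have hmem : (⟨w', by omega⟩ : Fin n) ∈ (blk0 ρ₂').image (emb2 n w') := by
      have h0 : (⟨0, hnv'⟩ : Fin (n - w')) ∈ blk0 ρ₂' := (blk0_mem hnv' hP').2
      have : emb2 n w' ⟨0, hnv'⟩ = (⟨w', by omega⟩ : Fin n) := Fin.ext (by simp [emb2])
      exact this ▸ Finset.mem_image_of_mem _ h0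
    have : (⟨w', by omega⟩ : Fin n) ∈ insert (⟨0, hn⟩ : Fin n) ((blk0 ρ₂).image (emb2 n w)) := by
      rw [hB]; exact Finset.mem_insert.mpr (Or.inr hmem)
    rcases mem_B0 hn this with h | h
    · simp at h; omega
    · simp at h; omega
  rcases lt_trichotomy v v' with h | h | h
  · exact absurd (key v' v hv' hv π₂' π₂ hv1 hπ₂ hB.symm h) not_false
  · exact h
  · exact absurd (key v v' hv hv' π₂ π₂' hv1' hπ₂' hB h) not_false

lemma glue_left_sub {π₁' : Finset (Finset (Fin (v - 1)))} {π₂' : Finset (Finset (Fin (n - v)))}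
    (hv1 : 1 ≤ v) (hπ₁ : IsPartition π₁)
    (heq : glue n hn v hv π₁ π₂ = glue n hn v hv π₁' π₂') : π₁ ⊆ π₁' := by
  intro X hX
  have hmem : X.image (emb1 n v hv) ∈ glue n hn v hv π₁' π₂' := by
    rw [← heq]; exact (mem_glue_iff hn hv).mpr (Or.inr (Or.inl ⟨X, hX, rfl⟩))
  obtain ⟨x, hx⟩ := hπ₁.1 X hX
  have hxm : emb1 n v hv x ∈ X.image (emb1 n v hv) := Finset.mem_image_of_mem _ hx
  have hxb := mem_img1 hv hxm
  rcases (mem_glue_iff hn hv).mp hmem with h | ⟨Y, hY, hYe⟩ | ⟨Y, hY, hYe⟩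
  · have : (⟨0, hn⟩ : Fin n) ∈ X.image (emb1 n v hv) := by
      rw [h]; exact Finset.mem_insert_self _ _
    have := mem_img1 hv this
    have hzz : ((⟨0, hn⟩ : Fin n) : ℕ) = 0 := rfl
    omega
  · rw [Finset.image_injective (emb1_inj hv) hYe.symm] at hY; exact hY
  · have : emb1 n v hv x ∈ Y.image (emb2 n v) := by rw [← hYe]; exact hxm
    have := mem_img2 this; omega

lemma glue_right_sub {π₁' : Finset (Finset (Fin (v - 1)))} {π₂' : Finset (Finset (Fin (n - v)))}
    (hv1 : 1 ≤ v) (hπ₁ : IsPartition π₁) (hπ₂ : IsPartition π₂)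
    (hπ₁' : IsPartition π₁') (hπ₂' : IsPartition π₂')
    (heq : glue n hn v hv π₁ π₂ = glue n hn v hv π₁' π₂') : π₂ ⊆ π₂' := by
  intro X hX
  obtain ⟨a, ha⟩ := hπ₂.1 X hX
  have hnv : 1 ≤ n - v := by have := a.isLt; omega
  by_cases hXb : X = blk0 π₂
  · have hB : insert (⟨0, hn⟩ : Fin n) ((blk0 π₂).image (emb2 n v))
        = insert (⟨0, hn⟩ : Fin n) ((blk0 π₂').image (emb2 n v)) := by
      rw [← blk0_glue hn hv hv1 hπ₁ hπ₂, ← blk0_glue hn hv hv1 hπ₁' hπ₂', heq]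
    have h0l : (⟨0, hn⟩ : Fin n) ∉ (blk0 π₂).image (emb2 n v) := by
      intro h; have := mem_img2 h
      have hzz : ((⟨0, hn⟩ : Fin n) : ℕ) = 0 := rfl; omega
    have h0r : (⟨0, hn⟩ : Fin n) ∉ (blk0 π₂').image (emb2 n v) := by
      intro h; have := mem_img2 h
      have hzz : ((⟨0, hn⟩ : Fin n) : ℕ) = 0 := rfl; omega
    have himg : (blk0 π₂).image (emb2 n v) = (blk0 π₂').image (emb2 n v) := by
      have := congrArg (fun S => Finset.erase S (⟨0, hn⟩ : Fin n)) hB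
      simpa [Finset.erase_insert h0l, Finset.erase_insert h0r] using this
    have : blk0 π₂ = blk0 π₂' := Finset.image_injective emb2_inj himg
    rw [hXb, this]
    exact (blk0_mem hnv hπ₂').1
  · have hmem : X.image (emb2 n v) ∈ glue n hn v hv π₁' π₂' := by
      rw [← heq]
      exact (mem_glue_iff hn hv).mpr (Or.inr (Or.inr ⟨X, Finset.mem_erase.mpr ⟨hXb, hX⟩, rfl⟩))
    have hxm : emb2 n v a ∈ X.image (emb2 n v) := Finset.mem_image_of_mem _ ha
    have hxb := mem_img2 hxm
    rcases (mem_glue_iff hn hv).mp hmem with h | ⟨Y, hY, hYe⟩ | ⟨Y, hY, hYe⟩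
    · have : (⟨0, hn⟩ : Fin n) ∈ X.image (emb2 n v) := by
        rw [h]; exact Finset.mem_insert_self _ _
      have := mem_img2 this
      have hzz : ((⟨0, hn⟩ : Fin n) : ℕ) = 0 := rfl; omega
    · have : emb2 n v a ∈ Y.image (emb1 n v hv) := by rw [← hYe]; exact hxm
      have := mem_img1 hv this; omega
    · rw [Finset.image_injective emb2_inj hYe.symm] at hY
      exact Finset.mem_of_mem_erase hY


lemma glue_surj {π : Finset (Finset (Fin n))} (hπm : π ∈ NCPartitions n) :
    ∃ (v : ℕ) (hv1 : 1 ≤ v) (hv : v ≤ n)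
      (π₁ : Finset (Finset (Fin (v - 1)))) (π₂ : Finset (Finset (Fin (n - v)))),
      π₁ ∈ NCPartitions (v - 1) ∧ π₂ ∈ NCPartitions (n - v) ∧
      glue n hn v hv π₁ π₂ = π := by
  obtain ⟨hπ, hnc⟩ := mem_NCPartitions.mp hπm
  have hz : ((⟨0, hn⟩ : Fin n) : ℕ) = 0 := rfl
  obtain ⟨hV₀π, hzV₀⟩ := blk0_mem hn hπ
  -- choose v
  obtain ⟨v, hv1, hv, hvmem, hvmin⟩ :
      ∃ v, 1 ≤ v ∧ v ≤ n ∧ (∀ hlt : v < n, (⟨v, hlt⟩ : Fin n) ∈ blk0 π) ∧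
        (∀ x ∈ blk0 π, (x : ℕ) = 0 ∨ v ≤ (x : ℕ)) := by
    by_cases hE : ((blk0 π).erase ⟨0, hn⟩).Nonempty
    · set m := ((blk0 π).erase ⟨0, hn⟩).min' hE with hm
      obtain ⟨hmne, hmV₀⟩ := Finset.mem_erase.mp (Finset.min'_mem _ hE)
      have hmpos : 1 ≤ (m : ℕ) := by
        rcases Nat.eq_zero_or_pos (m : ℕ) with h | h
        · exact absurd (Fin.ext h : m = ⟨0, hn⟩) hmne
        · exact h
      refine ⟨(m : ℕ), hmpos, le_of_lt m.isLt, ?_, ?_⟩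
      · intro hlt
        have : (⟨(m : ℕ), hlt⟩ : Fin n) = m := Fin.ext rfl
        rw [this]; exact hmV₀
      · intro x hx
        by_cases hxz : x = ⟨0, hn⟩
        · left; rw [hxz]
        · right
          exact Finset.min'_le _ x (Finset.mem_erase.mpr ⟨hxz, hx⟩)
    · refine ⟨n, hn, le_refl n, fun hlt => absurd hlt (lt_irrefl n), ?_⟩
      intro x hx
      by_cases hxz : x = ⟨0, hn⟩
      · left; rw [hxz]
      · exact absurd ⟨x, Finset.mem_erase.mpr ⟨hxz, hx⟩⟩ hE
  -- the dichotomy for blocks other than blk0 π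
  have dich : ∀ W ∈ π, W ≠ blk0 π →
      (∀ x ∈ W, 1 ≤ (x : ℕ) ∧ (x : ℕ) < v) ∨ (∀ x ∈ W, v ≤ (x : ℕ)) := by
    intro W hW hWne
    have hpos : ∀ x ∈ W, 1 ≤ (x : ℕ) := by
      intro x hx
      rcases Nat.eq_zero_or_pos (x : ℕ) with h | h
      · exfalso
        have : x = ⟨0, hn⟩ := Fin.ext h
        rw [this] at hx
        exact hWne (block_unique hπ hW hV₀π hx hzV₀)
      · exact h
    by_contra hcon
    push_neg at hcon
    obtain ⟨⟨y, hyW, hy⟩, x, hxW, hx⟩ := hcon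
    have hyv : v ≤ (y : ℕ) := hy (hpos y hyW)
    have hxv : (x : ℕ) < v := hx
    have hlt : v < n := lt_of_le_of_lt hyv y.isLt
    have hmV : (⟨v, hlt⟩ : Fin n) ∈ blk0 π := hvmem hlt
    have hyne : (y : ℕ) ≠ v := by
      intro hcon2
      have hyy : y = ⟨v, hlt⟩ := Fin.ext hcon2
      rw [hyy] at hyW
      exact hWne (block_unique hπ hW hV₀π hyW hmV)
    have h1x := hpos x hxW
    refine hnc ⟨⟨0, hn⟩, x, ⟨v, hlt⟩, y,
      Fin.lt_def.mpr (by simp; omega), Fin.lt_def.mpr (by simp; omega),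
      Fin.lt_def.mpr (by simp; omega),
      ⟨blk0 π, hV₀π, hzV₀, hmV⟩, ⟨W, hW, hxW, hyW⟩, ?_⟩
    rintro ⟨U, hU, hzU, hxU⟩
    have hUb : U = blk0 π := block_unique hπ hU hV₀π hzU hzV₀
    rw [hUb] at hxU
    exact hWne (block_unique hπ hW hV₀π hxW hxU)
  -- the two component partitions
  set P₁ : Finset (Fin n) → Prop := fun W => ∀ x ∈ W, 1 ≤ (x : ℕ) ∧ (x : ℕ) < v with hP₁def
  set P₂ : Finset (Fin n) → Prop := fun W => ∀ x ∈ W, v ≤ (x : ℕ) with hP₂def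
  set E : Finset (Fin n) := (blk0 π).erase ⟨0, hn⟩ with hEdef
  have hEbound : ∀ x ∈ E, v ≤ (x : ℕ) := by
    intro x hx
    obtain ⟨hxne, hxV₀⟩ := Finset.mem_erase.mp hx
    rcases hvmin x hxV₀ with h | h
    · exact absurd (Fin.ext h) hxne
    · exact h
  set π₁ : Finset (Finset (Fin (v - 1))) :=
    (π.filter P₁).image (fun W => W.preimage (emb1 n v hv) ((emb1_inj hv).injOn)) with hπ₁def
  set π₂ : Finset (Finset (Fin (n - v))) :=
    (π.filter P₂).image (fun W => W.preimage (emb2 n v) (emb2_inj.injOn)) ∪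
      (if E.Nonempty then {E.preimage (emb2 n v) (emb2_inj.injOn)} else ∅) with hπ₂def
  -- image ∘ preimage identities
  have g1 : ∀ W : Finset (Fin n), P₁ W →
      (W.preimage (emb1 n v hv) ((emb1_inj hv).injOn)).image (emb1 n v hv) = W := by
    intro W hP
    ext y
    simp only [Finset.mem_image, Finset.mem_preimage]
    constructor
    · rintro ⟨a, haW, rfl⟩; exact haW
    · intro hy
      obtain ⟨h1, h2⟩ := hP y hy
      refine ⟨⟨(y : ℕ) - 1, by omega⟩, ?_, ?_⟩
      · have : emb1 n v hv ⟨(y : ℕ) - 1, by omega⟩ = y := Fin.ext (by simp [emb1]; omega)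
        rw [this]; exact hy
      · exact Fin.ext (by simp [emb1]; omega)
  have g2 : ∀ W : Finset (Fin n), (∀ x ∈ W, v ≤ (x : ℕ)) →
      (W.preimage (emb2 n v) (emb2_inj.injOn)).image (emb2 n v) = W := by
    intro W hP
    ext y
    simp only [Finset.mem_image, Finset.mem_preimage]
    constructor
    · rintro ⟨a, haW, rfl⟩; exact haW
    · intro hy
      have h1 := hP y hy
      have h2 := y.isLt
      refine ⟨⟨(y : ℕ) - v, by omega⟩, ?_, ?_⟩
      · have : emb2 n v ⟨(y : ℕ) - v, by omega⟩ = y := Fin.ext (by simp [emb2]; omega)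
        rw [this]; exact hy
      · exact Fin.ext (by simp [emb2]; omega)
  -- π₁ is an NC partition
  have hπ₁P : IsPartition π₁ := by
    constructor
    · intro U hU
      obtain ⟨W, hWf, rfl⟩ := Finset.mem_image.mp hU
      obtain ⟨hWπ, hWP⟩ := Finset.mem_filter.mp hWf
      obtain ⟨x, hx⟩ := hπ.1 W hWπ
      obtain ⟨h1, h2⟩ := hWP x hx
      refine ⟨⟨(x : ℕ) - 1, by omega⟩, Finset.mem_preimage.mpr ?_⟩
      have : emb1 n v hv ⟨(x : ℕ) - 1, by omega⟩ = x := Fin.ext (by simp [emb1]; omega)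
      rw [this]; exact hx
    · intro b
      have hb2 := b.isLt
      have hxb : 1 ≤ (emb1 n v hv b : ℕ) ∧ (emb1 n v hv b : ℕ) < v := by simp [emb1]; omega
      obtain ⟨W, ⟨hW, hxW⟩, huniq⟩ := hπ.2 (emb1 n v hv b)
      have hWne : W ≠ blk0 π := by
        intro hcon
        rw [hcon] at hxW
        rcases hvmin _ hxW with h | h <;> omega
      have hWP : P₁ W := by
        rcases dich W hW hWne with h | h
        · exact h
        · exact absurd (h _ hxW) (by omega)
      refine ⟨W.preimage (emb1 n v hv) ((emb1_inj hv).injOn),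
        ⟨Finset.mem_image_of_mem _ (Finset.mem_filter.mpr ⟨hW, hWP⟩),
          Finset.mem_preimage.mpr hxW⟩, ?_⟩
      rintro U ⟨hU, hbU⟩
      obtain ⟨W', hW'f, rfl⟩ := Finset.mem_image.mp hU
      obtain ⟨hW'π, hW'P⟩ := Finset.mem_filter.mp hW'f
      rw [huniq W' ⟨hW'π, Finset.mem_preimage.mp hbU⟩]
  have hπ₁N : NoCrossing π₁ := by
    rintro ⟨p1, q1, p2, q2, h12, h23, h34, ⟨U, hU, hp1, hp2⟩, ⟨U', hU', hq1, hq2⟩, hnot⟩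
    obtain ⟨W, hWf, rfl⟩ := Finset.mem_image.mp hU
    obtain ⟨hWπ, hWP⟩ := Finset.mem_filter.mp hWf
    obtain ⟨W', hW'f, rfl⟩ := Finset.mem_image.mp hU'
    obtain ⟨hW'π, hW'P⟩ := Finset.mem_filter.mp hW'f
    refine hnc ⟨emb1 n v hv p1, emb1 n v hv q1, emb1 n v hv p2, emb1 n v hv q2,
      (emb1_lt_iff hv).mpr h12, (emb1_lt_iff hv).mpr h23, (emb1_lt_iff hv).mpr h34,
      ⟨W, hWπ, Finset.mem_preimage.mp hp1, Finset.mem_preimage.mp hp2⟩,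
      ⟨W', hW'π, Finset.mem_preimage.mp hq1, Finset.mem_preimage.mp hq2⟩, ?_⟩
    rintro ⟨U₀, hU₀, h1, h2⟩
    have hU₀ne : U₀ ≠ blk0 π := by
      intro hcon
      rw [hcon] at h1
      rcases hvmin _ h1 with h | h
      · simp [emb1] at h
      · have : (emb1 n v hv p1 : ℕ) < v := by have := p1.isLt; simp [emb1]; omega
        omega
    have hU₀P : P₁ U₀ := by
      rcases dich U₀ hU₀ hU₀ne with h | h
      · exact h
      · have := h _ h1
        have hb : (emb1 n v hv p1 : ℕ) < v := by have := p1.isLt; simp [emb1]; omega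
        omega
    exact hnot ⟨U₀.preimage (emb1 n v hv) ((emb1_inj hv).injOn),
      Finset.mem_image_of_mem _ (Finset.mem_filter.mpr ⟨hU₀, hU₀P⟩),
      Finset.mem_preimage.mpr h1, Finset.mem_preimage.mpr h2⟩
  have hπ₂P : IsPartition π₂ := by
    constructor
    · intro U hU
      rcases Finset.mem_union.mp hU with h | h
      · obtain ⟨W, hWf, rfl⟩ := Finset.mem_image.mp h
        obtain ⟨hWπ, hWP⟩ := Finset.mem_filter.mp hWf
        obtain ⟨x, hx⟩ := hπ.1 W hWπ
        have h1 := hWP x hx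
        have h2 := x.isLt
        refine ⟨⟨(x : ℕ) - v, by omega⟩, Finset.mem_preimage.mpr ?_⟩
        have he : emb2 n v ⟨(x : ℕ) - v, by omega⟩ = x := Fin.ext (by simp [emb2]; omega)
        rw [he]; exact hx
      · by_cases hEne : E.Nonempty
        · rw [if_pos hEne, Finset.mem_singleton] at h
          subst h
          obtain ⟨x, hx⟩ := hEne
          have h1 := hEbound x hx
          have h2 := x.isLt
          refine ⟨⟨(x : ℕ) - v, by omega⟩, Finset.mem_preimage.mpr ?_⟩
          have he : emb2 n v ⟨(x : ℕ) - v, by omega⟩ = x := Fin.ext (by simp [emb2]; omega)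
          rw [he]; exact hx
        · rw [if_neg hEne] at h
          exact absurd h (Finset.notMem_empty U)
    · intro b
      have hb2 := b.isLt
      have hxv : v ≤ (emb2 n v b : ℕ) := by simp [emb2]
      obtain ⟨W, ⟨hW, hxW⟩, huniq⟩ := hπ.2 (emb2 n v b)
      by_cases hWb : W = blk0 π
      · have hbne : emb2 n v b ≠ ⟨0, hn⟩ := by
          intro hcon
          have := congrArg Fin.val hcon
          simp [emb2, hz] at this
          omega
        have hxE : emb2 n v b ∈ E := Finset.mem_erase.mpr ⟨hbne, hWb ▸ hxW⟩
        have hEne : E.Nonempty := ⟨_, hxE⟩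
        refine ⟨E.preimage (emb2 n v) (emb2_inj.injOn),
          ⟨Finset.mem_union_right _ (by rw [if_pos hEne]; exact Finset.mem_singleton_self _),
            Finset.mem_preimage.mpr hxE⟩, ?_⟩
        rintro U ⟨hU, hbU⟩
        rcases Finset.mem_union.mp hU with h | h
        · obtain ⟨W', hW'f, rfl⟩ := Finset.mem_image.mp h
          obtain ⟨hW'π, hW'P⟩ := Finset.mem_filter.mp hW'f
          have hWW : W' = W := huniq W' ⟨hW'π, Finset.mem_preimage.mp hbU⟩
          exfalso
          have hzW : (⟨0, hn⟩ : Fin n) ∈ W' := by rw [hWW, hWb]; exact hzV₀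
          have := hW'P _ hzW
          rw [hz] at this
          omega
        · rw [if_pos hEne, Finset.mem_singleton] at h
          exact h
      · have hWP : P₂ W := by
          rcases dich W hW hWb with h | h
          · have := h _ hxW; omega
          · exact h
        refine ⟨W.preimage (emb2 n v) (emb2_inj.injOn),
          ⟨Finset.mem_union_left _
            (Finset.mem_image_of_mem _ (Finset.mem_filter.mpr ⟨hW, hWP⟩)),
            Finset.mem_preimage.mpr hxW⟩, ?_⟩
        rintro U ⟨hU, hbU⟩
        rcases Finset.mem_union.mp hU with h | h
        · obtain ⟨W', hW'f, rfl⟩ := Finset.mem_image.mp h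
          obtain ⟨hW'π, hW'P⟩ := Finset.mem_filter.mp hW'f
          rw [huniq W' ⟨hW'π, Finset.mem_preimage.mp hbU⟩]
        · by_cases hEne : E.Nonempty
          · rw [if_pos hEne, Finset.mem_singleton] at h
            subst h
            exfalso
            have hxE : emb2 n v b ∈ E := Finset.mem_preimage.mp hbU
            have hxB : emb2 n v b ∈ blk0 π := Finset.mem_of_mem_erase hxE
            exact hWb (block_unique hπ hW hV₀π hxW hxB)
          · rw [if_neg hEne] at h
            exact absurd h (Finset.notMem_empty U)
  have hrep : ∀ U ∈ π₂, ∃ S : Finset (Fin n), ((S ∈ π ∧ P₂ S) ∨ S = E) ∧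
      U = S.preimage (emb2 n v) (emb2_inj.injOn) := by
    intro U hU
    rcases Finset.mem_union.mp hU with h | h
    · obtain ⟨W, hWf, rfl⟩ := Finset.mem_image.mp h
      obtain ⟨hWπ, hWP⟩ := Finset.mem_filter.mp hWf
      exact ⟨W, Or.inl ⟨hWπ, hWP⟩, rfl⟩
    · by_cases hEne : E.Nonempty
      · rw [if_pos hEne, Finset.mem_singleton] at h
        exact ⟨E, Or.inr rfl, h⟩
      · rw [if_neg hEne] at h
        exact absurd h (Finset.notMem_empty U)
  have hπ₂N : NoCrossing π₂ := by
    rintro ⟨p1, q1, p2, q2, h12, h23, h34, ⟨U, hU, hp1, hp2⟩, ⟨U', hU', hq1, hq2⟩, hnot⟩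
    obtain ⟨S, hS, rfl⟩ := hrep U hU
    obtain ⟨S', hS', rfl⟩ := hrep U' hU'
    have hT : ∀ (S : Finset (Fin n)), ((S ∈ π ∧ P₂ S) ∨ S = E) →
        ∃ T ∈ π, ∀ a : Fin (n - v),
          a ∈ S.preimage (emb2 n v) (emb2_inj.injOn) → emb2 n v a ∈ T := by
      rintro S (⟨hSπ, hSP⟩ | rfl)
      · exact ⟨S, hSπ, fun a ha => Finset.mem_preimage.mp ha⟩
      · exact ⟨blk0 π, hV₀π, fun a ha => Finset.mem_of_mem_erase (Finset.mem_preimage.mp ha)⟩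
    obtain ⟨T, hTπ, hTmem⟩ := hT S hS
    obtain ⟨T', hT'π, hT'mem⟩ := hT S' hS'
    refine hnc ⟨emb2 n v p1, emb2 n v q1, emb2 n v p2, emb2 n v q2,
      emb2_lt_iff.mpr h12, emb2_lt_iff.mpr h23, emb2_lt_iff.mpr h34,
      ⟨T, hTπ, hTmem _ hp1, hTmem _ hp2⟩, ⟨T', hT'π, hT'mem _ hq1, hT'mem _ hq2⟩, ?_⟩
    rintro ⟨U₀, hU₀, h1, h2⟩
    have hval1 : v ≤ (emb2 n v p1 : ℕ) := by simp [emb2]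
    have hval2 : v ≤ (emb2 n v q1 : ℕ) := by simp [emb2]
    by_cases hU₀b : U₀ = blk0 π
    · have hne1 : emb2 n v p1 ≠ ⟨0, hn⟩ := by
        intro hcon; have := congrArg Fin.val hcon; rw [hz] at this; omega
      have hne2 : emb2 n v q1 ≠ ⟨0, hn⟩ := by
        intro hcon; have := congrArg Fin.val hcon; rw [hz] at this; omega
      have h1E : emb2 n v p1 ∈ E := Finset.mem_erase.mpr ⟨hne1, hU₀b ▸ h1⟩
      have h2E : emb2 n v q1 ∈ E := Finset.mem_erase.mpr ⟨hne2, hU₀b ▸ h2⟩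
      have hEne : E.Nonempty := ⟨_, h1E⟩
      exact hnot ⟨E.preimage (emb2 n v) (emb2_inj.injOn),
        Finset.mem_union_right _ (by rw [if_pos hEne]; exact Finset.mem_singleton_self _),
        Finset.mem_preimage.mpr h1E, Finset.mem_preimage.mpr h2E⟩
    · have hU₀P : P₂ U₀ := by
        rcases dich U₀ hU₀ hU₀b with h | h
        · have := h _ h1; omega
        · exact h
      exact hnot ⟨U₀.preimage (emb2 n v) (emb2_inj.injOn),
        Finset.mem_union_left _
          (Finset.mem_image_of_mem _ (Finset.mem_filter.mpr ⟨hU₀, hU₀P⟩)),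
        Finset.mem_preimage.mpr h1, Finset.mem_preimage.mpr h2⟩
  refine ⟨v, hv1, hv, π₁, π₂, mem_NCPartitions.mpr ⟨hπ₁P, hπ₁N⟩,
    mem_NCPartitions.mpr ⟨hπ₂P, hπ₂N⟩, ?_⟩
  have himg1 : π₁.image (fun V => V.image (emb1 n v hv)) = π.filter P₁ := by
    rw [hπ₁def, Finset.image_image]
    have hcg : ∀ W ∈ π.filter P₁,
        ((fun V => V.image (emb1 n v hv)) ∘
          (fun W => W.preimage (emb1 n v hv) ((emb1_inj hv).injOn))) W = id W := by
      intro W hW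
      exact g1 W (Finset.mem_filter.mp hW).2
    rw [Finset.image_congr hcg, Finset.image_id]
  by_cases hEne : E.Nonempty
  · have hnv : 1 ≤ n - v := by
      obtain ⟨x, hx⟩ := hEne
      have := hEbound x hx; have := x.isLt; omega
    have hvlt : v < n := by omega
    have hEmem : E.preimage (emb2 n v) (emb2_inj.injOn) ∈ π₂ :=
      Finset.mem_union_right _ (by rw [if_pos hEne]; exact Finset.mem_singleton_self _)
    have hblk : blk0 π₂ = E.preimage (emb2 n v) (emb2_inj.injOn) := by
      refine blk0_eq hπ₂P hEmem (x := ⟨0, hnv⟩) (Finset.mem_preimage.mpr ?_) rfl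
      have he : emb2 n v ⟨0, hnv⟩ = (⟨v, hvlt⟩ : Fin n) := Fin.ext (by simp [emb2])
      rw [he]
      refine Finset.mem_erase.mpr ⟨?_, hvmem hvlt⟩
      intro hc; rw [Fin.mk.injEq] at hc; omega
    have hB0 : insert (⟨0, hn⟩ : Fin n) ((blk0 π₂).image (emb2 n v)) = blk0 π := by
      rw [hblk, g2 E hEbound, hEdef, Finset.insert_erase hzV₀]
    have hEnotin : E.preimage (emb2 n v) (emb2_inj.injOn) ∉
        (π.filter P₂).image (fun W => W.preimage (emb2 n v) (emb2_inj.injOn)) := by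
      intro h
      obtain ⟨W, hWf, hWe⟩ := Finset.mem_image.mp h
      obtain ⟨hWπ, hWP⟩ := Finset.mem_filter.mp hWf
      have hWE : W = E := by
        have h2 := congrArg (fun S => S.image (emb2 n v)) hWe
        simpa [g2 W hWP, g2 E hEbound] using h2
      obtain ⟨x, hx⟩ := hπ.1 W hWπ
      have hxB : x ∈ blk0 π := by
        rw [hWE] at hx; exact Finset.mem_of_mem_erase hx
      have hWB : W = blk0 π := block_unique hπ hWπ hV₀π hx hxB
      rw [hWE] at hWB
      have : (⟨0, hn⟩ : Fin n) ∈ E := by rw [hWB]; exact hzV₀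
      exact absurd this (Finset.notMem_erase _ _)
    have herase : π₂.erase (blk0 π₂) =
        (π.filter P₂).image (fun W => W.preimage (emb2 n v) (emb2_inj.injOn)) := by
      rw [hblk, hπ₂def, if_pos hEne, Finset.erase_union_distrib, Finset.erase_singleton,
        Finset.erase_eq_of_notMem hEnotin, Finset.union_empty]
    have himg2 : (π₂.erase (blk0 π₂)).image (fun V => V.image (emb2 n v)) = π.filter P₂ := by
      rw [herase, Finset.image_image]
      have hcg : ∀ W ∈ π.filter P₂,
          ((fun V => V.image (emb2 n v)) ∘
            (fun W => W.preimage (emb2 n v) (emb2_inj.injOn))) W = id W := by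
        intro W hW
        exact g2 W (Finset.mem_filter.mp hW).2
      rw [Finset.image_congr hcg, Finset.image_id]
    rw [glue, hB0, himg1, himg2]
    ext U
    simp only [Finset.mem_insert, Finset.mem_union, Finset.mem_filter]
    constructor
    · rintro (rfl | ⟨h, -⟩ | ⟨h, -⟩)
      · exact hV₀π
      · exact h
      · exact h
    · intro hU
      by_cases hUb : U = blk0 π
      · exact Or.inl hUb
      · rcases dich U hU hUb with h | h
        · exact Or.inr (Or.inl ⟨hU, h⟩)
        · exact Or.inr (Or.inr ⟨hU, h⟩)
  · have hveq : v = n := by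
      by_contra h
      have hlt : v < n := by omega
      refine hEne ⟨⟨v, hlt⟩, Finset.mem_erase.mpr ⟨?_, hvmem hlt⟩⟩
      intro hc; rw [Fin.mk.injEq] at hc; omega
    have hfilter2 : π.filter P₂ = ∅ := by
      rw [Finset.filter_eq_empty_iff]
      intro W hW hWP
      obtain ⟨x, hx⟩ := hπ.1 W hW
      have h1 := hWP x hx
      have h2 := x.isLt
      omega
    have hπ₂e : π₂ = ∅ := by
      rw [hπ₂def, if_neg hEne, hfilter2, Finset.image_empty, Finset.union_empty]
    have hblkV : blk0 π = {⟨0, hn⟩} := by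
      apply Finset.Subset.antisymm
      · intro x hx
        rcases hvmin x hx with h | h
        · exact Finset.mem_singleton.mpr (Fin.ext h)
        · have := x.isLt; omega
      · intro x hx
        rw [Finset.mem_singleton.mp hx]; exact hzV₀
    rw [glue, hπ₂e, himg1, blk0_empty]
    simp only [Finset.image_empty, Finset.erase_empty, Finset.union_empty,
      Finset.insert_empty]
    ext U
    simp only [Finset.mem_insert, Finset.mem_filter]
    constructor
    · rintro (rfl | ⟨h, -⟩)
      · rw [← hblkV]; exact hV₀π
      · exact h
    · intro hU
      by_cases hUb : U = blk0 π
      · left; rw [hUb, hblkV]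
      · rcases dich U hU hUb with h | h
        · exact Or.inr ⟨hU, h⟩
        · exfalso
          obtain ⟨x, hx⟩ := hπ.1 U hU
          have h1 := h x hx
          have h2 := x.isLt
          omega


lemma Tr_rec (k : ℕ → ℂ) (r : ℕ) {n : ℕ} (hn : 1 ≤ n) :
    Tr k r n = ∑ v ∈ Finset.Icc 1 n, Am k (v - 1) * Tr k (r + 1) (n - v) := by
  have hrhs : ∑ v ∈ Finset.Icc 1 n, Am k (v - 1) * Tr k (r + 1) (n - v)
      = ∑ a ∈ (Finset.Icc 1 n).sigma
          (fun v => NCPartitions (v - 1) ×ˢ NCPartitions (n - v)),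
          (∏ V ∈ a.2.1, k V.card) *
            (k ((blk0 a.2.2).card + (r + 1)) * ∏ V ∈ a.2.2.erase (blk0 a.2.2), k V.card) := by
    rw [Finset.sum_sigma]
    refine Finset.sum_congr rfl fun v hv => ?_
    rw [Finset.sum_product, Am, Tr, Finset.sum_mul_sum]
  rw [Tr, hrhs]
  symm
  refine Finset.sum_bij
    (fun (a : Σ _v : ℕ, Finset (Finset (Fin (_v - 1))) × Finset (Finset (Fin (n - _v))))
      (ha : a ∈ (Finset.Icc 1 n).sigma
        (fun v => NCPartitions (v - 1) ×ˢ NCPartitions (n - v))) =>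
        glue n hn a.1 (Finset.mem_Icc.mp (Finset.mem_sigma.mp ha).1).2 a.2.1 a.2.2)
    ?_ ?_ ?_ ?_
  · rintro ⟨v, π₁, π₂⟩ ha
    obtain ⟨hv, hp⟩ := Finset.mem_sigma.mp ha
    obtain ⟨hv1, hv2⟩ := Finset.mem_Icc.mp hv
    obtain ⟨h1, h2⟩ := Finset.mem_product.mp hp
    exact glue_mem hn _ hv1 h1 h2
  · rintro ⟨v, π₁, π₂⟩ ha ⟨v', π₁', π₂'⟩ ha' h
    obtain ⟨hv, hp⟩ := Finset.mem_sigma.mp ha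
    obtain ⟨hv1, hv2⟩ := Finset.mem_Icc.mp hv
    obtain ⟨h1, h2⟩ := Finset.mem_product.mp hp
    obtain ⟨hv', hp'⟩ := Finset.mem_sigma.mp ha'
    obtain ⟨hv1', hv2'⟩ := Finset.mem_Icc.mp hv'
    obtain ⟨h1', h2'⟩ := Finset.mem_product.mp hp'
    have hP1 := (mem_NCPartitions.mp h1).1
    have hP2 := (mem_NCPartitions.mp h2).1
    have hP1' := (mem_NCPartitions.mp h1').1
    have hP2' := (mem_NCPartitions.mp h2').1
    have hvv : v = v' := glue_v_eq hn _ hv1 hv1' hv2' hP1 hP2 hP1' hP2' h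
    subst hvv
    have e1 : π₁ = π₁' :=
      Finset.Subset.antisymm (glue_left_sub hn _ hv1 hP1 h) (glue_left_sub hn _ hv1 hP1' h.symm)
    have e2 : π₂ = π₂' :=
      Finset.Subset.antisymm (glue_right_sub hn _ hv1 hP1 hP2 hP1' hP2' h)
        (glue_right_sub hn _ hv1 hP1' hP2' hP1 hP2 h.symm)
    subst e1; subst e2
    rfl
  · intro π hπ
    obtain ⟨v, hv1, hv, π₁, π₂, h1, h2, heq⟩ := glue_surj hn hπ
    exact ⟨⟨v, π₁, π₂⟩, Finset.mem_sigma.mpr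
      ⟨Finset.mem_Icc.mpr ⟨hv1, hv⟩, Finset.mem_product.mpr ⟨h1, h2⟩⟩, heq⟩
  · rintro ⟨v, π₁, π₂⟩ ha
    obtain ⟨hv, hp⟩ := Finset.mem_sigma.mp ha
    obtain ⟨hv1, hv2⟩ := Finset.mem_Icc.mp hv
    obtain ⟨h1, h2⟩ := Finset.mem_product.mp hp
    exact (glue_weight hn _ k r hv1 (mem_NCPartitions.mp h1).1 (mem_NCPartitions.mp h2).1).symm

noncomputable def Bf (g : ℕ → ℂ) (s m : ℕ) : ℂ :=
  ∑ i ∈ Finset.Nat.antidiagonalTuple s m, ∏ j, g (i j)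

lemma Bf_one (g : ℕ → ℂ) (m : ℕ) : Bf g 1 m = g m := by
  rw [Bf, Finset.Nat.antidiagonalTuple_one, Finset.sum_singleton]
  simp

lemma Bf_succ (g : ℕ → ℂ) (s m : ℕ) :
    Bf g (s + 1) m = ∑ p ∈ Finset.HasAntidiagonal.antidiagonal m, g p.1 * Bf g s p.2 := by
  have h2 : ∑ p ∈ Finset.HasAntidiagonal.antidiagonal m, g p.1 * Bf g s p.2
      = ∑ a ∈ (Finset.HasAntidiagonal.antidiagonal m).sigma (fun p => Finset.Nat.antidiagonalTuple s p.2),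
          g a.1.1 * ∏ j, g (a.2 j) := by
    rw [Finset.sum_sigma]
    refine Finset.sum_congr rfl fun p hp => ?_
    rw [Bf, Finset.mul_sum]
  rw [Bf, h2]
  symm
  refine Finset.sum_bij (fun a _ => Fin.cons a.1.1 a.2) ?_ ?_ ?_ ?_
  · rintro ⟨⟨x, y⟩, t⟩ ha
    obtain ⟨h1, h2⟩ := Finset.mem_sigma.mp ha
    rw [Finset.Nat.mem_antidiagonalTuple] at h2 ⊢
    rw [Fin.sum_cons, h2]
    exact Finset.HasAntidiagonal.mem_antidiagonal.mp h1
  · rintro ⟨⟨x, y⟩, t⟩ ha ⟨⟨x', y'⟩, t'⟩ ha' h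
    obtain ⟨h1, h2⟩ := Finset.mem_sigma.mp ha
    obtain ⟨h1', h2'⟩ := Finset.mem_sigma.mp ha'
    have hx : x = x' := by have := congrFun h 0; simpa using this
    have ht : t = t' := by
      funext j
      have := congrFun h j.succ
      simpa using this
    subst hx
    have hy : y = y' := by
      rw [Finset.Nat.mem_antidiagonalTuple] at h2 h2'
      dsimp only at h2 h2'
      rw [← h2, ← h2', ht]
    subst hy; subst ht; rfl
  · intro b hb
    refine ⟨⟨(b 0, ∑ j : Fin s, b j.succ), Fin.tail b⟩, Finset.mem_sigma.mpr ⟨?_, ?_⟩, ?_⟩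
    · rw [Finset.HasAntidiagonal.mem_antidiagonal]
      rw [Finset.Nat.mem_antidiagonalTuple] at hb
      rw [← hb, Fin.sum_univ_succ]
    · rw [Finset.Nat.mem_antidiagonalTuple]
      rfl
    · exact Fin.cons_self_tail b
  · rintro ⟨⟨x, y⟩, t⟩ ha
    simp [Fin.prod_univ_succ]

noncomputable def Sv (k : ℕ → ℂ) (r n : ℕ) : ℂ :=
  if n = 0 then k r else ∑ s ∈ Finset.Icc 1 n, k (s + r) * Bf (Am k) s (n - s)

lemma Sv_zero (k : ℕ → ℂ) (r : ℕ) : Sv k r 0 = k r := by simp [Sv]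

lemma Sv_rec (k : ℕ → ℂ) (r : ℕ) {n : ℕ} (hn : 1 ≤ n) :
    Sv k r n = ∑ v ∈ Finset.Icc 1 n, Am k (v - 1) * Sv k (r + 1) (n - v) := by
  rw [Sv, if_neg (by omega)]
  have hL : Finset.Icc 1 n = insert 1 (Finset.Icc 2 n) := by
    ext x; simp only [Finset.mem_Icc, Finset.mem_insert]; omega
  have hR : Finset.Icc 1 n = insert n (Finset.Icc 1 (n - 1)) := by
    ext x; simp only [Finset.mem_Icc, Finset.mem_insert]; omega
  have hLs : ∑ s ∈ Finset.Icc 1 n, k (s + r) * Bf (Am k) s (n - s)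
      = k (1 + r) * Am k (n - 1) + ∑ s ∈ Finset.Icc 2 n, k (s + r) * Bf (Am k) s (n - s) := by
    rw [hL, Finset.sum_insert (by simp), Bf_one]
  have hRs : ∑ v ∈ Finset.Icc 1 n, Am k (v - 1) * Sv k (r + 1) (n - v)
      = Am k (n - 1) * k (r + 1) +
        ∑ v ∈ Finset.Icc 1 (n - 1), Am k (v - 1) * Sv k (r + 1) (n - v) := by
    rw [hR, Finset.sum_insert (by simp; omega), Nat.sub_self, Sv_zero]
  have hstep1 : ∑ s ∈ Finset.Icc 2 n, k (s + r) * Bf (Am k) s (n - s)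
      = ∑ t ∈ Finset.Icc 1 (n - 1), k (t + 1 + r) * Bf (Am k) (t + 1) (n - 1 - t) := by
    refine Finset.sum_nbij' (fun s => s - 1) (fun t => t + 1) ?_ ?_ ?_ ?_ ?_
    · intro a ha; simp only [Finset.mem_Icc] at *; omega
    · intro a ha; simp only [Finset.mem_Icc] at *; omega
    · intro a ha; simp only [Finset.mem_Icc] at ha; omega
    · intro a ha; simp only [Finset.mem_Icc] at ha; omega
    · intro a ha
      simp only [Finset.mem_Icc] at ha
      have e1 : a - 1 + 1 = a := by omega
      have e2 : n - 1 - (a - 1) = n - a := by omega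
      rw [e1, e2]
  have hstep2 : ∑ t ∈ Finset.Icc 1 (n - 1), k (t + 1 + r) * Bf (Am k) (t + 1) (n - 1 - t)
      = ∑ a ∈ (Finset.Icc 1 (n - 1)).sigma (fun t => Finset.HasAntidiagonal.antidiagonal (n - 1 - t)),
          k (a.1 + 1 + r) * (Am k a.2.1 * Bf (Am k) a.1 a.2.2) := by
    rw [Finset.sum_sigma]
    refine Finset.sum_congr rfl fun t ht => ?_
    rw [Bf_succ, Finset.mul_sum]
  have hstep3 : ∑ v ∈ Finset.Icc 1 (n - 1), Am k (v - 1) * Sv k (r + 1) (n - v)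
      = ∑ a ∈ (Finset.Icc 1 (n - 1)).sigma (fun v => Finset.Icc 1 (n - v)),
          Am k (a.1 - 1) * (k (a.2 + (r + 1)) * Bf (Am k) a.2 (n - a.1 - a.2)) := by
    rw [Finset.sum_sigma]
    refine Finset.sum_congr rfl fun v hv => ?_
    simp only [Finset.mem_Icc] at hv
    rw [Sv, if_neg (by omega), Finset.mul_sum]
  have hbij : ∑ a ∈ (Finset.Icc 1 (n - 1)).sigma (fun t => Finset.HasAntidiagonal.antidiagonal (n - 1 - t)),
          k (a.1 + 1 + r) * (Am k a.2.1 * Bf (Am k) a.1 a.2.2)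
      = ∑ a ∈ (Finset.Icc 1 (n - 1)).sigma (fun v => Finset.Icc 1 (n - v)),
          Am k (a.1 - 1) * (k (a.2 + (r + 1)) * Bf (Am k) a.2 (n - a.1 - a.2)) := by
    refine Finset.sum_nbij' (fun a => ⟨a.2.1 + 1, a.1⟩) (fun a => ⟨a.2, (a.1 - 1, n - a.1 - a.2)⟩)
      ?_ ?_ ?_ ?_ ?_
    · rintro ⟨t, x, y⟩ ha
      simp only [Finset.mem_sigma, Finset.mem_Icc, Finset.HasAntidiagonal.mem_antidiagonal] at ha ⊢
      omega
    · rintro ⟨v, s⟩ ha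
      simp only [Finset.mem_sigma, Finset.mem_Icc, Finset.HasAntidiagonal.mem_antidiagonal] at ha ⊢
      omega
    · rintro ⟨t, x, y⟩ ha
      simp only [Finset.mem_sigma, Finset.mem_Icc, Finset.HasAntidiagonal.mem_antidiagonal] at ha
      have e1 : x + 1 - 1 = x := by omega
      have e2 : n - (x + 1) - t = y := by omega
      show (⟨t, (x + 1 - 1, n - (x + 1) - t)⟩ : (_ : ℕ) × ℕ × ℕ) = ⟨t, (x, y)⟩
      rw [e1, e2]
    · rintro ⟨v, s⟩ ha
      simp only [Finset.mem_sigma, Finset.mem_Icc] at ha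
      have e1 : v - 1 + 1 = v := by omega
      show (⟨v - 1 + 1, s⟩ : (_ : ℕ) × ℕ) = ⟨v, s⟩
      rw [e1]
    · rintro ⟨t, x, y⟩ ha
      simp only [Finset.mem_sigma, Finset.mem_Icc, Finset.HasAntidiagonal.mem_antidiagonal] at ha
      dsimp only
      have e1 : x + 1 - 1 = x := by omega
      have e2 : n - (x + 1) - t = y := by omega
      rw [e1, e2]
      ring
  rw [hLs, hRs, hstep1, hstep2, hstep3, hbij, Nat.add_comm 1 r]
  ring

lemma Tr_eq_Sv (k : ℕ → ℂ) : ∀ n, 1 ≤ n → ∀ r, Tr k r n = Sv k r n := by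
  intro n
  induction n using Nat.strong_induction_on with
  | _ n ih =>
    intro hn r
    rw [Tr_rec k r hn, Sv_rec k r hn]
    refine Finset.sum_congr rfl fun v hv => ?_
    obtain ⟨h1, h2⟩ := Finset.mem_Icc.mp hv
    by_cases hnv : n - v = 0
    · rw [hnv, Tr_zero, Sv_zero]
    · rw [ih (n - v) (by omega) (by omega) (r + 1)]

lemma Am_rec (k : ℕ → ℂ) {n : ℕ} (hn : 1 ≤ n) :
    Am k n = ∑ s ∈ Finset.Icc 1 n, k s * Bf (Am k) s (n - s) := by
  rw [Am_eq_Tr k hn, Tr_eq_Sv k n hn 0, Sv, if_neg (by omega)]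
  refine Finset.sum_congr rfl fun s _ => by rw [Nat.add_zero]

end Glue2

end MCAux


/-- The moment–cumulant relation over non-crossing partitions holds for all n ≥ 1 iff the
recursion `m n = Σ_{s=1}^n Σ_{i₁+⋯+i_s=n-s} k_s m_{i₁}⋯m_{i_s}` holds for all n ≥ 1. -/
theorem momentCumulant_iff_recursion (m k : ℕ → ℂ) (hm0 : m 0 = 1) :
    (∀ n, 1 ≤ n → m n = ∑ π ∈ NCPartitions n, ∏ V ∈ π, k V.card) ↔
    (∀ n, 1 ≤ n → m n = ∑ s ∈ Finset.Icc 1 n,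
        ∑ i ∈ Finset.Nat.antidiagonalTuple s (n - s), k s * ∏ j, m (i j)) := by
  have sum_eq : ∀ n, 1 ≤ n → (∀ j, j < n → m j = MCAux.Am k j) →
      (∑ s ∈ Finset.Icc 1 n, ∑ i ∈ Finset.Nat.antidiagonalTuple s (n - s),
        k s * ∏ j, m (i j)) = MCAux.Am k n := by
    intro n hn hja
    rw [MCAux.Am_rec k hn]
    refine Finset.sum_congr rfl fun s hs => ?_
    rw [MCAux.Bf, Finset.mul_sum]
    refine Finset.sum_congr rfl fun i hi => ?_
    congr 1
    refine Finset.prod_congr rfl fun j _ => ?_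
    have hmem := Finset.Nat.mem_antidiagonalTuple.mp hi
    have hbound : i j ≤ n - s := by
      rw [← hmem]
      exact Finset.single_le_sum (fun _ _ => Nat.zero_le _) (Finset.mem_univ j)
    obtain ⟨hs1, hs2⟩ := Finset.mem_Icc.mp hs
    exact hja (i j) (by omega)
  constructor
  · intro h n hn
    have hAm : ∀ j, m j = MCAux.Am k j := by
      intro j
      rcases Nat.eq_zero_or_pos j with h0 | h1
      · rw [h0, hm0, MCAux.Am_zero]
      · exact h j h1
    rw [h n hn]
    exact (sum_eq n hn (fun j _ => hAm j)).symm
  · intro h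
    have hAm : ∀ j, m j = MCAux.Am k j := by
      intro j
      induction j using Nat.strong_induction_on with
      | _ j ih =>
        rcases Nat.eq_zero_or_pos j with h0 | h1
        · rw [h0, hm0, MCAux.Am_zero]
        · rw [h j h1]
          exact sum_eq j h1 ih
    intro n hn
    exact hAm n
end

section
/- Let (𝒜, φ) be a non-commutative probability space and define the free cumulants k_n recursively by φ(a₁⋯a_n) = Σ_{π ∈ NC(n)} k_π[a₁,...,a_n]. Then for all n ≥ 2 and a₁,...,a_n ∈ 𝒜, if a_i = 1 for some i, then k_n(a₁,...,a_n) = 0. -/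
open scoped Classical


open scoped Classical

/-!
Induction on `n`. Fix `i` with `aᵢ = 1` and split the moment-cumulant sum for `φ(a₁⋯aₙ)`
according to whether `{i}` is a block. Deleting that block is a bijection onto `NC(n-1)` that
divides `k_π` by `k₁(1) = φ(1) = 1`, so these partitions contribute `φ(a₁⋯âᵢ⋯aₙ) = φ(a₁⋯aₙ)`.
In any other partition the block through `i` has at least two elements, so its cumulant vanishes
by induction unless the block is all of `{1, …, n}`. Hence the moment-cumulant relation reads
`φ(a₁⋯aₙ) = φ(a₁⋯aₙ) + kₙ(a₁, …, aₙ)`.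
-/

open Finset

lemma List.prod_ofFn_succAbove_of_eq_one {M : Type*} [Monoid M] :
    ∀ {m : ℕ} {a : Fin (m + 1) → M} {i : Fin (m + 1)}, a i = 1 →
      (List.ofFn fun j => a (i.succAbove j)).prod = (List.ofFn a).prod
  | 0, a, i, hi => by
    obtain rfl : i = 0 := Fin.fin_one_eq_zero i
    simp [hi]
  | m + 1, a, i, hi => by
    cases i using Fin.cases with
    | zero => simp [List.ofFn_succ, hi]
    | succ j =>
      simp [List.ofFn_succ, Fin.succ_succAbove_succ,
        List.prod_ofFn_succAbove_of_eq_one (a := fun t => a t.succ) hi]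

lemma apply_comp_orderEmbOfFin_eq {α A X : Type*} [LinearOrder α] (F : ∀ n, (Fin n → A) → X)
    (a : α → A) {s : Finset α} {n : ℕ} (hs : s.card = n) {g : Fin n → α} (hg : StrictMono g)
    (hgs : ∀ j, g j ∈ s) :
    F s.card (fun j => a (s.orderEmbOfFin rfl j)) = F n (fun j => a (g j)) := by
  obtain rfl := orderEmbOfFin_unique hs hgs hg
  subst hs
  rfl

def SameBlock {N : ℕ} (π : Finset (Finset (Fin N))) (x y : Fin N) : Prop :=
  ∃ V ∈ π, x ∈ V ∧ y ∈ V

lemma NoCrossing.of_sameBlock_iff {m N : ℕ} {σ : Finset (Finset (Fin m))}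
    {π : Finset (Finset (Fin N))} {f : Fin m → Fin N} (hf : StrictMono f)
    (hsame : ∀ x y, SameBlock σ x y ↔ SameBlock π (f x) (f y)) (hπ : NoCrossing π) :
    NoCrossing σ := by
  rintro ⟨p₁, q₁, p₂, q₂, h₁, h₂, h₃, hp, hq, hpq⟩
  exact hπ ⟨f p₁, f q₁, f p₂, f q₂, hf h₁, hf h₂, hf h₃, (hsame _ _).1 hp, (hsame _ _).1 hq,
    mt (hsame _ _).2 hpq⟩

namespace IsPartition

variable {N : ℕ} {π : Finset (Finset (Fin N))}

lemma eq_of_mem (hπ : IsPartition π) {V W : Finset (Fin N)} (hV : V ∈ π) (hW : W ∈ π)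
    {x : Fin N} (hxV : x ∈ V) (hxW : x ∈ W) : V = W :=
  (hπ.2 x).unique ⟨hV, hxV⟩ ⟨hW, hxW⟩

lemma eq_singleton_univ (hπ : IsPartition π) (h : univ ∈ π) : π = {univ} := by
  refine eq_singleton_iff_unique_mem.2 ⟨h, fun V hV => ?_⟩
  obtain ⟨x, hx⟩ := hπ.1 V hV
  exact hπ.eq_of_mem hV h hx (mem_univ x)

end IsPartition

lemma mem_NCPartitions {N : ℕ} {π : Finset (Finset (Fin N))} :
    π ∈ NCPartitions N ↔ IsPartition π ∧ NoCrossing π := by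
  simp [NCPartitions]

lemma singleton_univ_mem_NCPartitions {N : ℕ} (hN : 0 < N) : {univ} ∈ NCPartitions N := by
  refine mem_NCPartitions.2 ⟨⟨?_, fun x => ⟨univ, ⟨mem_singleton_self _, mem_univ x⟩, ?_⟩⟩, ?_⟩
  · rintro V hV
    rw [mem_singleton.1 hV]
    exact ⟨⟨0, hN⟩, mem_univ _⟩
  · exact fun W hW => mem_singleton.1 hW.1
  · rintro ⟨p₁, q₁, -, -, -, -, -, -, -, hpq⟩
    exact hpq ⟨univ, mem_singleton_self _, mem_univ p₁, mem_univ q₁⟩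

lemma NCPartitions_one : NCPartitions 1 = {{univ}} := by
  ext π
  refine ⟨fun hπ => ?_, fun hπ => mem_singleton.1 hπ ▸ singleton_univ_mem_NCPartitions one_pos⟩
  obtain ⟨hπ, -⟩ := mem_NCPartitions.1 hπ
  obtain ⟨V, ⟨hV, h0⟩, -⟩ := hπ.2 0
  have hV_univ : V = univ := eq_univ_of_forall fun x => Subsingleton.elim 0 x ▸ h0
  exact mem_singleton.2 (hπ.eq_singleton_univ (hV_univ ▸ hV))

section Cumulants

variable {A : Type*} [Ring A] (k : ∀ n : ℕ, (Fin n → A) → ℂ)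

lemma cumProd_singleton_univ {N : ℕ} (a : Fin N → A) : cumProd k {univ} a = k N a := by
  rw [cumProd, prod_singleton]
  exact apply_comp_orderEmbOfFin_eq k a (card_fin N) strictMono_id fun _ => mem_univ _

lemma cumulant_one_eq [Algebra ℂ A] {φ : A →ₗ[ℂ] ℂ} (hk : MomentCumulant φ k) (x : A) :
    k 1 (fun _ => x) = φ x := by
  have h := hk 1 fun _ => x
  rw [NCPartitions_one, sum_singleton, cumProd_singleton_univ] at h
  simpa using h.symm

end Cumulants

section RemoveSingleton

variable {m : ℕ} (i : Fin (m + 1))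

noncomputable def removeSingletonBlock (π : Finset (Finset (Fin (m + 1)))) :
    Finset (Finset (Fin m)) :=
  (π.erase {i}).image fun V => V.preimage i.succAbove Fin.succAbove_right_injective.injOn

noncomputable def insertSingletonBlock (σ : Finset (Finset (Fin m))) :
    Finset (Finset (Fin (m + 1))) :=
  insert {i} (σ.image (map i.succAboveEmb))

lemma notMem_map_succAboveEmb (U : Finset (Fin m)) : i ∉ U.map i.succAboveEmb := by
  simp [Fin.succAbove_ne]

lemma singleton_notMem_image_map_succAboveEmb (σ : Finset (Finset (Fin m))) :
    {i} ∉ σ.image (map i.succAboveEmb) := fun h => by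
  obtain ⟨U, -, hU⟩ := mem_image.1 h
  exact notMem_map_succAboveEmb i U (hU ▸ mem_singleton_self i)

lemma map_succAboveEmb_preimage {V : Finset (Fin (m + 1))} (hV : i ∉ V) :
    (V.preimage i.succAbove Fin.succAbove_right_injective.injOn).map i.succAboveEmb = V := by
  ext y
  rcases Fin.eq_self_or_eq_succAbove i y with rfl | ⟨x, rfl⟩
  · simp [hV]
  · simp

lemma sameBlock_removeSingletonBlock {π : Finset (Finset (Fin (m + 1)))} {x y : Fin m} :
    SameBlock (removeSingletonBlock i π) x y ↔ SameBlock π (i.succAbove x) (i.succAbove y) := by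
  constructor
  · rintro ⟨_, hU, hx, hy⟩
    obtain ⟨V, hV, rfl⟩ := mem_image.1 hU
    exact ⟨V, mem_of_mem_erase hV, mem_preimage.1 hx, mem_preimage.1 hy⟩
  · rintro ⟨V, hV, hx, hy⟩
    have hV_ne : V ≠ {i} := by
      rintro rfl
      exact Fin.succAbove_ne i x (mem_singleton.1 hx)
    exact ⟨_, mem_image_of_mem _ (mem_erase.2 ⟨hV_ne, hV⟩), mem_preimage.2 hx, mem_preimage.2 hy⟩

lemma sameBlock_insertSingletonBlock {σ : Finset (Finset (Fin m))} {x y : Fin m} :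
    SameBlock (insertSingletonBlock i σ) (i.succAbove x) (i.succAbove y) ↔ SameBlock σ x y := by
  constructor
  · rintro ⟨V, hV, hx, hy⟩
    rcases mem_insert.1 hV with rfl | hV
    · exact absurd (mem_singleton.1 hx) (Fin.succAbove_ne i x)
    obtain ⟨U, hU, rfl⟩ := mem_image.1 hV
    exact ⟨U, hU, (mem_map' _).1 hx, (mem_map' _).1 hy⟩
  · rintro ⟨U, hU, hx, hy⟩
    exact ⟨_, mem_insert_of_mem (mem_image_of_mem _ hU), mem_map_of_mem _ hx,
      mem_map_of_mem _ hy⟩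

lemma ne_of_sameBlock_insertSingletonBlock {σ : Finset (Finset (Fin m))} {p q : Fin (m + 1)}
    (h : SameBlock (insertSingletonBlock i σ) p q) (hpq : p ≠ q) : p ≠ i ∧ q ≠ i := by
  obtain ⟨V, hV, hp, hq⟩ := h
  rcases mem_insert.1 hV with rfl | hV
  · exact absurd ((mem_singleton.1 hp).trans (mem_singleton.1 hq).symm) hpq
  obtain ⟨U, -, rfl⟩ := mem_image.1 hV
  exact ⟨ne_of_mem_of_not_mem hp (notMem_map_succAboveEmb i U),
    ne_of_mem_of_not_mem hq (notMem_map_succAboveEmb i U)⟩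

lemma noCrossing_removeSingletonBlock {π : Finset (Finset (Fin (m + 1)))} (hπ : NoCrossing π) :
    NoCrossing (removeSingletonBlock i π) :=
  hπ.of_sameBlock_iff (Fin.strictMono_succAbove i) fun _ _ => sameBlock_removeSingletonBlock i

lemma noCrossing_insertSingletonBlock {σ : Finset (Finset (Fin m))} (hσ : NoCrossing σ) :
    NoCrossing (insertSingletonBlock i σ) := by
  rintro ⟨p₁, q₁, p₂, q₂, h₁, h₂, h₃, hp, hq, hpq⟩
  obtain ⟨hp₁, hp₂⟩ := ne_of_sameBlock_insertSingletonBlock i hp (h₁.trans h₂).ne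
  obtain ⟨hq₁, hq₂⟩ := ne_of_sameBlock_insertSingletonBlock i hq (h₂.trans h₃).ne
  obtain ⟨x₁, rfl⟩ := Fin.exists_succAbove_eq hp₁
  obtain ⟨x₂, rfl⟩ := Fin.exists_succAbove_eq hp₂
  obtain ⟨y₁, rfl⟩ := Fin.exists_succAbove_eq hq₁
  obtain ⟨y₂, rfl⟩ := Fin.exists_succAbove_eq hq₂
  have hmono := Fin.strictMono_succAbove i
  exact hσ ⟨x₁, y₁, x₂, y₂, hmono.lt_iff_lt.1 h₁, hmono.lt_iff_lt.1 h₂, hmono.lt_iff_lt.1 h₃,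
    (sameBlock_insertSingletonBlock i).1 hp, (sameBlock_insertSingletonBlock i).1 hq,
    mt (sameBlock_insertSingletonBlock i).2 hpq⟩

lemma IsPartition.notMem_of_singleton_mem {π : Finset (Finset (Fin (m + 1)))}
    (hπ : IsPartition π) (hi : {i} ∈ π) {V : Finset (Fin (m + 1))} (hV : V ∈ π.erase {i}) :
    i ∉ V := fun hiV =>
  ne_of_mem_erase hV (hπ.eq_of_mem (mem_of_mem_erase hV) hi hiV (mem_singleton_self i))

lemma isPartition_removeSingletonBlock {π : Finset (Finset (Fin (m + 1)))} (hπ : IsPartition π)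
    (hi : {i} ∈ π) : IsPartition (removeSingletonBlock i π) := by
  refine ⟨fun U hU => ?_, fun x => ?_⟩
  · obtain ⟨V, hV, rfl⟩ := mem_image.1 hU
    obtain ⟨v, hv⟩ := hπ.1 V (mem_of_mem_erase hV)
    obtain ⟨x, rfl⟩ := Fin.exists_succAbove_eq (ne_of_mem_of_not_mem hv
      (hπ.notMem_of_singleton_mem i hi hV))
    exact ⟨x, mem_preimage.2 hv⟩
  · obtain ⟨V, ⟨hV, hxV⟩, -⟩ := hπ.2 (i.succAbove x)
    obtain ⟨U, hU, hxU, -⟩ := (sameBlock_removeSingletonBlock i).2 ⟨V, hV, hxV, hxV⟩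
    refine ⟨U, ⟨hU, hxU⟩, fun W ⟨hW, hxW⟩ => ?_⟩
    obtain ⟨V', hV', rfl⟩ := mem_image.1 hU
    obtain ⟨W', hW', rfl⟩ := mem_image.1 hW
    rw [hπ.eq_of_mem (mem_of_mem_erase hW') (mem_of_mem_erase hV') (mem_preimage.1 hxW)
      (mem_preimage.1 hxU)]

lemma isPartition_insertSingletonBlock {σ : Finset (Finset (Fin m))} (hσ : IsPartition σ) :
    IsPartition (insertSingletonBlock i σ) := by
  refine ⟨fun V hV => ?_, fun y => ?_⟩
  · rcases mem_insert.1 hV with rfl | hV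
    · exact singleton_nonempty i
    · obtain ⟨U, hU, rfl⟩ := mem_image.1 hV
      exact (hσ.1 U hU).map
  rcases Fin.eq_self_or_eq_succAbove i y with rfl | ⟨x, rfl⟩
  · refine ⟨{y}, ⟨mem_insert_self _ _, mem_singleton_self y⟩, fun W ⟨hW, hyW⟩ => ?_⟩
    by_contra hW_ne
    obtain ⟨U, -, rfl⟩ := mem_image.1 ((mem_insert.1 hW).resolve_left hW_ne)
    exact notMem_map_succAboveEmb y U hyW
  · obtain ⟨U, ⟨hU, hxU⟩, hU_unique⟩ := hσ.2 x
    refine ⟨U.map i.succAboveEmb, ⟨mem_insert_of_mem (mem_image_of_mem _ hU),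
      mem_map_of_mem _ hxU⟩, fun W ⟨hW, hxW⟩ => ?_⟩
    rcases mem_insert.1 hW with rfl | hW
    · exact absurd (mem_singleton.1 hxW) (Fin.succAbove_ne i x)
    obtain ⟨U', hU', rfl⟩ := mem_image.1 hW
    rw [hU_unique U' ⟨hU', (mem_map' _).1 hxW⟩]

lemma insertSingletonBlock_removeSingletonBlock {π : Finset (Finset (Fin (m + 1)))}
    (hπ : IsPartition π) (hi : {i} ∈ π) :
    insertSingletonBlock i (removeSingletonBlock i π) = π := by
  rw [insertSingletonBlock, removeSingletonBlock, image_image, image_congr (g := id), image_id,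
    insert_erase hi]
  exact fun V hV => map_succAboveEmb_preimage i (hπ.notMem_of_singleton_mem i hi hV)

lemma removeSingletonBlock_insertSingletonBlock (σ : Finset (Finset (Fin m))) :
    removeSingletonBlock i (insertSingletonBlock i σ) = σ := by
  have hi := singleton_notMem_image_map_succAboveEmb i σ
  rw [insertSingletonBlock, removeSingletonBlock, erase_insert hi, image_image,
    image_congr (g := id), image_id]
  exact fun U _ => preimage_map i.succAboveEmb U

variable {A : Type*} [Ring A] (k : ∀ n : ℕ, (Fin n → A) → ℂ)

lemma cumProd_insertSingletonBlock (σ : Finset (Finset (Fin m))) (a : Fin (m + 1) → A) :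
    cumProd k (insertSingletonBlock i σ) a =
      k 1 (fun _ => a i) * cumProd k σ (fun j => a (i.succAbove j)) := by
  have hi := singleton_notMem_image_map_succAboveEmb i σ
  rw [cumProd, cumProd, insertSingletonBlock, prod_insert hi,
    prod_image fun _ _ _ _ h => map_injective i.succAboveEmb h]
  congr 1
  · exact apply_comp_orderEmbOfFin_eq k a (card_singleton i) (Subsingleton.strictMono _)
      fun _ => mem_singleton_self i
  · refine prod_congr rfl fun U _ => ?_
    exact apply_comp_orderEmbOfFin_eq k a (card_map _)
      ((Fin.strictMono_succAbove i).comp (U.orderEmbOfFin rfl).strictMono)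
      fun j => mem_map_of_mem _ (orderEmbOfFin_mem U rfl j)

lemma sum_cumProd_of_singleton_mem (a : Fin (m + 1) → A) :
    ∑ π ∈ (NCPartitions (m + 1)).filter ({i} ∈ ·), cumProd k π a =
      k 1 (fun _ => a i) * ∑ σ ∈ NCPartitions m, cumProd k σ (fun j => a (i.succAbove j)) := by
  rw [mul_sum]
  symm
  refine sum_nbij' (insertSingletonBlock i) (removeSingletonBlock i) (fun σ hσ => ?_)
    (fun π hπ => ?_) (fun σ _ => removeSingletonBlock_insertSingletonBlock i σ) (fun π hπ => ?_)
    (fun σ _ => (cumProd_insertSingletonBlock i k σ a).symm)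
  · obtain ⟨hσ, hσ_nc⟩ := mem_NCPartitions.1 hσ
    exact mem_filter.2 ⟨mem_NCPartitions.2 ⟨isPartition_insertSingletonBlock i hσ,
      noCrossing_insertSingletonBlock i hσ_nc⟩, mem_insert_self _ _⟩
  · obtain ⟨hπ, hi⟩ := mem_filter.1 hπ
    obtain ⟨hπ, hπ_nc⟩ := mem_NCPartitions.1 hπ
    exact mem_NCPartitions.2 ⟨isPartition_removeSingletonBlock i hπ hi,
      noCrossing_removeSingletonBlock i hπ_nc⟩
  · obtain ⟨hπ, hi⟩ := mem_filter.1 hπ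
    exact insertSingletonBlock_removeSingletonBlock i (mem_NCPartitions.1 hπ).1 hi

end RemoveSingleton

section Vanishing

variable {A : Type*} [Ring A] (k : ∀ n : ℕ, (Fin n → A) → ℂ) {N : ℕ} {i : Fin N}
  {a : Fin N → A}

lemma cumProd_eq_zero_of_eq_one {π : Finset (Finset (Fin N))} (hπ : IsPartition π)
    (hai : a i = 1) (hi : {i} ∉ π) (htop : π ≠ {univ})
    (hvanish : ∀ M < N, 2 ≤ M → ∀ b : Fin M → A, (∃ t, b t = 1) → k M b = 0) :
    cumProd k π a = 0 := by
  obtain ⟨V, ⟨hV, hiV⟩, -⟩ := hπ.2 i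
  have hV_ge : 2 ≤ V.card :=
    one_lt_card_iff_nontrivial.2 ((nontrivial_iff_ne_singleton hiV).2 (ne_of_mem_of_not_mem hV hi))
  have hV_lt : V.card < N := by
    simpa using (card_lt_iff_ne_univ V).2 fun h => htop (hπ.eq_singleton_univ (h ▸ hV))
  obtain ⟨t, ht⟩ : i ∈ Set.range (V.orderEmbOfFin rfl) := by rwa [range_orderEmbOfFin]
  exact prod_eq_zero hV (hvanish _ hV_lt hV_ge _ ⟨t, by rw [ht, hai]⟩)

lemma sum_cumProd_of_singleton_notMem (hN : 2 ≤ N) (hai : a i = 1)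
    (hvanish : ∀ M < N, 2 ≤ M → ∀ b : Fin M → A, (∃ t, b t = 1) → k M b = 0) :
    ∑ π ∈ (NCPartitions N).filter ({i} ∉ ·), cumProd k π a = k N a := by
  have hi : {i} ∉ ({univ} : Finset (Finset (Fin N))) := fun h => by
    have h_card : ({i} : Finset (Fin N)).card = N :=
      (congrArg card (mem_singleton.1 h)).trans (card_fin N)
    rw [card_singleton] at h_card
    omega
  rw [sum_eq_single_of_mem {univ} (mem_filter.2 ⟨singleton_univ_mem_NCPartitions (by omega), hi⟩),
    cumProd_singleton_univ]
  intro π hπ htop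
  obtain ⟨hπ, hi⟩ := mem_filter.1 hπ
  exact cumProd_eq_zero_of_eq_one k (mem_NCPartitions.1 hπ).1 hai hi htop hvanish

end Vanishing

/-- Free cumulants of order ≥ 2 vanish when one argument is the unit. -/
theorem cumulant_eq_zero_of_one {A : Type*} [Ring A] [Algebra ℂ A]
    (φ : A →ₗ[ℂ] ℂ) (hφ : φ 1 = 1)
    (k : ∀ n : ℕ, (Fin n → A) → ℂ) (hk : MomentCumulant φ k) :
    ∀ n, 2 ≤ n → ∀ a : Fin n → A, (∃ i, a i = 1) → k n a = 0 := by
  intro n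
  induction n using Nat.strong_induction_on with
  | _ n ih =>
  rintro hn a ⟨i, hai⟩
  obtain ⟨m, rfl⟩ : ∃ m, n = m + 1 := ⟨n - 1, by omega⟩
  have h := hk (m + 1) a
  rw [← List.prod_ofFn_succAbove_of_eq_one hai, hk m,
    ← sum_filter_add_sum_filter_not (NCPartitions (m + 1)) fun π => {i} ∈ π,
    sum_cumProd_of_singleton_mem, sum_cumProd_of_singleton_notMem k hn hai ih, hai,
    cumulant_one_eq k hk, hφ, one_mul] at h
  exact add_eq_left.1 h.symm
end
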